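/- arXiv:1910.07051 — 4 statements merged into one kernel-verified Lean document; each statement's English description precedes it below -/
import Mathlib

section
/- For every natural number n, the number of partitions of 5n+4 is divisible by 5. -/
/-!
Write `E = ∏ (1 - Xⁱ)`, so that `E · ∑ p(n) Xⁿ = 1`. Over `ZMod 5` the Frobenius gives
`E ^ 5 = E(X ^ 5)`, a series in `X ^ 5` with constant term `1`, and `E ^ 5 · ∑ p(n) Xⁿ = E · E ^ 3`.
By Euler's pentagonal number theorem and Jacobi's identity
`E ^ 3 = ∑ (-1)ˡ (2l + 1) X^(l(l+1)/2)`, a term of `E · E ^ 3` in degree `k ≡ 4 (mod 5)` comes from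
`k = t(3t - 1)/2 + l(l + 1)/2`, and then `3 (2l + 1)² + (6t - 1)² = 24k + 4 ≡ 0 (mod 5)` forces
`5 ∣ 2l + 1`. So `E ^ 5 · ∑ p(n) Xⁿ` vanishes in these degrees mod 5, hence so does `∑ p(n) Xⁿ`.

Jacobi's identity comes from a finite form of the triple product identity: differentiating it at
`z = -1` gives `(q; q)ₙ² = ∑ (-1)ˡ (2l + 1) q^(l(l+1)/2) [2n+1, n-l]_q`, and the Gaussian binomials
tend to `1 / E`.
-/

open Finset

section QBinomial

variable {R : Type*} [CommRing R] (Y : R)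

def qBinom : ℕ → ℕ → R
  | _, 0 => 1
  | 0, _ + 1 => 0
  | n + 1, k + 1 => qBinom n k + Y ^ (k + 1) * qBinom n (k + 1)

def qPoch (n : ℕ) : R := ∏ i ∈ range n, (1 - Y ^ (i + 1))

@[simp] lemma qBinom_zero_right (n : ℕ) : qBinom Y n 0 = 1 := by cases n <;> rfl

@[simp] lemma qBinom_zero_succ (k : ℕ) : qBinom Y 0 (k + 1) = 0 := rfl

lemma qBinom_succ_succ (n k : ℕ) :
    qBinom Y (n + 1) (k + 1) = qBinom Y n k + Y ^ (k + 1) * qBinom Y n (k + 1) := rfl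

lemma qBinom_eq_zero_of_lt {n k : ℕ} (h : n < k) : qBinom Y n k = 0 := by
  induction n generalizing k with
  | zero => obtain ⟨k, rfl⟩ := Nat.exists_eq_add_one_of_ne_zero h.ne'; rfl
  | succ n ih =>
    obtain ⟨k, rfl⟩ := Nat.exists_eq_add_one_of_ne_zero (by omega : k ≠ 0)
    rw [qBinom_succ_succ, ih (by omega), ih (by omega), mul_zero, add_zero]

@[simp] lemma qBinom_self (n : ℕ) : qBinom Y n n = 1 := by
  induction n with
  | zero => rfl
  | succ n ih =>
    rw [qBinom_succ_succ, ih, qBinom_eq_zero_of_lt Y n.lt_succ_self, mul_zero, add_zero]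

lemma qBinom_succ_succ' (n k : ℕ) :
    qBinom Y (n + 1) (k + 1) = Y ^ (n - k) * qBinom Y n k + qBinom Y n (k + 1) := by
  induction n generalizing k with
  | zero => cases k <;> simp [qBinom_succ_succ]
  | succ n ih =>
    cases k with
    | zero =>
      have pascal₁ : qBinom Y (n + 1) 1 = 1 + Y * qBinom Y n 1 := by
        simpa using qBinom_succ_succ Y n 0
      have ih₁ : qBinom Y (n + 1) 1 = Y ^ n + qBinom Y n 1 := by simpa using ih 0
      simp only [qBinom_succ_succ Y (n + 1) 0, qBinom_zero_right, zero_add, Nat.sub_zero, pow_one,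
        mul_one]
      linear_combination Y * ih₁ - pascal₁
    | succ k =>
      have ih₁ := ih k
      have ih₂ := ih (k + 1)
      rw [qBinom_succ_succ Y (n + 1) (k + 1), show n + 1 - (k + 1) = n - k by omega]
      rcases le_or_gt n k with h | h
      · rw [Nat.sub_eq_zero_of_le h] at ih₁ ⊢
        rw [qBinom_eq_zero_of_lt Y (by omega : n < k + 1),
          qBinom_eq_zero_of_lt Y (by omega : n < k + 1 + 1)] at ih₂
        linear_combination (Y ^ (k + 1 + 1) - 1) * ih₂
      · have pascal₁ := qBinom_succ_succ Y n k
        have pascal₂ := qBinom_succ_succ Y n (k + 1)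
        obtain ⟨j, rfl⟩ : ∃ j, n = k + 1 + j := ⟨n - (k + 1), by omega⟩
        rw [show k + 1 + j - k = j + 1 by omega] at ih₁ ⊢
        rw [show k + 1 + j - (k + 1) = j by omega] at ih₂
        linear_combination ih₁ + Y ^ (k + 1 + 1) * ih₂ - Y ^ (j + 1) * pascal₁ - pascal₂

lemma qBinom_add_symm (a b : ℕ) : qBinom Y (a + b) a = qBinom Y (a + b) b := by
  induction a generalizing b with
  | zero => simp
  | succ a ih =>
    induction b with
    | zero => simp
    | succ b ihb =>
      have h1 : qBinom Y (a + b + 1) a = qBinom Y (a + b + 1) (b + 1) := ih (b + 1)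
      have h2 : qBinom Y (a + b + 1) (a + 1) = qBinom Y (a + b + 1) b := by
        rwa [add_right_comm] at ihb
      rw [show a + 1 + (b + 1) = a + b + 1 + 1 by ring, qBinom_succ_succ Y (a + b + 1) a, h1, h2,
        qBinom_succ_succ' Y (a + b + 1) b, show a + b + 1 - b = a + 1 by omega]
      ring

lemma qBinom_mul_qPoch_mul_qPoch (a b : ℕ) :
    qBinom Y (a + b) a * qPoch Y a * qPoch Y b = qPoch Y (a + b) := by
  induction a generalizing b with
  | zero => simp [qPoch]
  | succ a ih =>
    induction b with
    | zero => simp [qPoch]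
    | succ b ihb =>
      have h1 := ih (b + 1)
      have h2 := ihb
      simp only [qPoch, prod_range_succ] at *
      rw [show a + 1 + (b + 1) = a + b + 1 + 1 by ring, qBinom_succ_succ,
        show a + b + 1 = a + (b + 1) by ring, prod_range_succ]
      rw [show a + 1 + b = a + (b + 1) by ring] at h2
      linear_combination (1 - Y ^ (a + 1)) * h1 + Y ^ (a + 1) * (1 - Y ^ (b + 1)) * h2

end QBinomial

def triangle (m : ℤ) : ℕ := (m * (m + 1) / 2).toNat

lemma two_mul_natCast_triangle (m : ℤ) : 2 * (triangle m : ℤ) = m * (m + 1) := by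
  have hev : 2 ∣ m * (m + 1) := (Int.even_mul_succ_self m).two_dvd
  have hnn : 0 ≤ m * (m + 1) / 2 := by
    apply Int.ediv_nonneg _ (by norm_num)
    rcases le_or_gt 0 m with h | h <;> nlinarith
  rw [triangle, Int.toNat_of_nonneg hnn, Int.mul_ediv_cancel' hev]

lemma natCast_triangle_add_one (m : ℤ) : (triangle (m + 1) : ℤ) = triangle m + (m + 1) := by
  have h1 := two_mul_natCast_triangle m
  have h2 := two_mul_natCast_triangle (m + 1)
  linarith

lemma triangle_neg_sub_one (m : ℤ) : triangle (-m - 1) = triangle m := by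
  have h1 := two_mul_natCast_triangle m
  have h2 := two_mul_natCast_triangle (-m - 1)
  have : (triangle (-m - 1) : ℤ) = triangle m := by linarith
  exact_mod_cast this

lemma le_triangle (l : ℕ) : l ≤ triangle l := by
  have h := two_mul_natCast_triangle l
  have : (l : ℤ) ≤ triangle l := by nlinarith
  exact_mod_cast this

section TripleProduct

open Polynomial

variable {R : Type*} [CommRing R] (Y : R)

lemma coeff_prod_C_pow_add_X (a k : ℕ) :
    (∏ m ∈ range a, (C (Y ^ m) + X)).coeff k = Y ^ triangle (k - a) * qBinom Y a k := by
  induction a generalizing k with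
  | zero => cases k <;> simp [coeff_one, triangle]
  | succ a ih =>
    rw [prod_range_succ, mul_add]
    cases k with
    | zero =>
      have h := natCast_triangle_add_one (-(a : ℤ) - 1)
      rw [sub_add_cancel] at h
      rw [coeff_add, coeff_mul_C, mul_coeff_zero, coeff_X_zero, mul_zero, add_zero, ih,
        qBinom_zero_right, qBinom_zero_right, mul_one, mul_one, ← pow_add]
      congr 1
      push_cast
      rw [zero_sub, zero_sub, neg_add']
      omega
    | succ k =>
      have h := natCast_triangle_add_one ((k : ℤ) - a)
      rw [coeff_add, coeff_mul_C, coeff_mul_X, ih, ih, qBinom_succ_succ]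
      rw [show ((k + 1 : ℕ) : ℤ) - (a + 1 : ℕ) = k - a by push_cast; ring,
        show ((k + 1 : ℕ) : ℤ) - a = k - a + 1 by push_cast; ring]
      have e : Y ^ triangle (k - a + 1) * Y ^ a = Y ^ triangle (k - a) * Y ^ (k + 1) := by
        rw [← pow_add, ← pow_add]
        congr 1
        omega
      linear_combination qBinom Y a (k + 1) * e

lemma coeff_prod_mul_prod (a b k : ℕ) :
    ((∏ m ∈ range a, (C (Y ^ m) + X)) * ∏ j ∈ range b, (1 + C (Y ^ (j + 1)) * X)).coeff k =
      Y ^ triangle (k - a) * qBinom Y (a + b) k := by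
  induction b generalizing k with
  | zero => simpa using coeff_prod_C_pow_add_X Y a k
  | succ b ih =>
    rw [prod_range_succ, ← mul_assoc, mul_add, mul_one, ← mul_assoc]
    cases k with
    | zero => rw [coeff_add, coeff_mul_X_zero, add_zero, ih, qBinom_zero_right, qBinom_zero_right]
    | succ k =>
      rw [coeff_add, coeff_mul_X, coeff_mul_C, ih, ih, ← add_assoc, qBinom_succ_succ']
      rcases le_or_gt k (a + b) with hk | hk
      · have h := natCast_triangle_add_one ((k : ℤ) - a)
        rw [show ((k + 1 : ℕ) : ℤ) - a = k - a + 1 by push_cast; ring]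
        have e : triangle (k - a + 1) + (a + b - k) = triangle (k - a) + (b + 1) := by omega
        rw [mul_add, ← mul_assoc, ← pow_add, e, pow_add]
        ring
      · rw [qBinom_eq_zero_of_lt Y hk]
        ring

/-- A finite form of Jacobi's triple product identity. -/
theorem prod_mul_prod_eq_sum_triangle (a b : ℕ) :
    (∏ m ∈ range a, (C (Y ^ m) + X)) * ∏ j ∈ range b, (1 + C (Y ^ (j + 1)) * X) =
      ∑ k ∈ range (a + b + 1), C (Y ^ triangle (k - a) * qBinom Y (a + b) k) * X ^ k := by
  ext k
  rw [coeff_prod_mul_prod, finsetSum_coeff]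
  simp only [coeff_C_mul_X_pow, sum_ite_eq, mem_range]
  split_ifs with hk
  · rfl
  · rw [qBinom_eq_zero_of_lt Y (by omega), mul_zero]

lemma natCast_mul_neg_one_pow_sub_one (k : ℕ) :
    (k : R) * (-1) ^ (k - 1) = -(k * (-1) ^ k) := by
  cases k <;> simp [pow_succ]

lemma prod_pow_sub_one (n : ℕ) : ∏ m ∈ range n, (Y ^ (m + 1) - 1) = (-1) ^ n * qPoch Y n := by
  rw [qPoch, ← card_range n, ← prod_const, card_range, ← prod_mul_distrib]
  exact prod_congr rfl fun _ _ => by ring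

/-- The derivative of the triple product at `X = -1`. -/
lemma neg_one_pow_mul_qPoch_sq (n : ℕ) :
    (-1) ^ n * qPoch Y n ^ 2 = ∑ k ∈ range (2 * n + 2),
      Y ^ triangle (k - (n + 1 : ℕ)) * qBinom Y (2 * n + 1) k * (k * (-1) ^ (k - 1)) := by
  have H := congrArg (fun p => (derivative p).eval (-1)) (prod_mul_prod_eq_sum_triangle Y (n + 1) n)
  rw [prod_range_succ'] at H
  simp only [derivative_mul, derivative_add, derivative_C, derivative_X, eval_add, eval_mul,
    eval_C, eval_X, pow_zero, zero_add, eval_one, derivative_sum, eval_finsetSum,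
    derivative_X_pow, eval_prod, add_neg_cancel, mul_zero, add_zero, zero_mul, mul_one, eval_pow,
    mul_neg_one, ← sub_eq_add_neg, prod_pow_sub_one] at H
  rw [show n + 1 + n + 1 = 2 * n + 2 by ring, show n + 1 + n = 2 * n + 1 by ring] at H
  rw [← H, qPoch]
  ring

lemma sum_range_two_mul_add_two {M : Type*} [AddCommMonoid M] (f : ℕ → M) (n : ℕ) :
    ∑ k ∈ range (2 * n + 2), f k = ∑ l ∈ range (n + 1), (f (n - l) + f (n + 1 + l)) := by
  rw [sum_add_distrib, show 2 * n + 2 = (n + 1) + (n + 1) by ring, sum_range_add,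
    ← sum_range_reflect f (n + 1)]
  simp only [add_tsub_cancel_right]

/-- A finite form of Jacobi's identity. -/
theorem qPoch_sq_eq_sum (n : ℕ) :
    qPoch Y n ^ 2 = ∑ l ∈ range (n + 1),
      (-1) ^ l * (2 * l + 1) * Y ^ triangle l * qBinom Y (2 * n + 1) (n - l) := by
  have H := neg_one_pow_mul_qPoch_sq Y n
  rw [sum_range_two_mul_add_two] at H
  refine (isUnit_neg_one.pow n).mul_left_cancel (H.trans ?_)
  rw [mul_sum]
  refine sum_congr rfl fun l hl => ?_
  obtain ⟨j, rfl⟩ : ∃ j, n = l + j := ⟨n - l, by simp at hl; omega⟩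
  rw [add_tsub_cancel_left,
    show ((j : ℕ) : ℤ) - (l + j + 1 : ℕ) = -l - 1 by push_cast; ring, triangle_neg_sub_one,
    show ((l + j + 1 + l : ℕ) : ℤ) - (l + j + 1 : ℕ) = l by push_cast; ring,
    show 2 * (l + j) + 1 = (l + j + 1 + l) + j by ring, qBinom_add_symm,
    natCast_mul_neg_one_pow_sub_one, natCast_mul_neg_one_pow_sub_one]
  have h : (-1 : R) ^ (2 * l) = 1 := (even_two_mul l).neg_one_pow
  push_cast
  linear_combination (j * (-1) ^ j * Y ^ triangle l * qBinom Y (l + j + 1 + l + j) j) * h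

end TripleProduct

section Jacobi

open PowerSeries

variable {R : Type*} [CommRing R] {D : ℕ}

lemma smodEq_X_pow_iff {a b : R⟦X⟧} :
    a ≡ b [SMOD Ideal.span {X ^ D}] ↔ ∀ d < D, coeff d a = coeff d b := by
  simp [SModEq.sub_mem, Ideal.mem_span_singleton, X_pow_dvd_iff, sub_eq_zero]

lemma X_pow_smodEq_zero {e : ℕ} (h : D ≤ e) : (X : R⟦X⟧) ^ e ≡ 0 [SMOD Ideal.span {X ^ D}] :=
  SModEq.zero.2 <| Ideal.mem_span_singleton.2 <| pow_dvd_pow X h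

lemma prod_one_sub_X_pow_smodEq_qPoch {m : ℕ} {s : Finset ℕ} (hs : range m ⊆ s) (hD : D ≤ m + 1) :
    ∏ i ∈ s, (1 - X ^ (i + 1)) ≡ qPoch (X : R⟦X⟧) m [SMOD Ideal.span {X ^ D}] := by
  classical
  have h : ∏ i ∈ s \ range m, (1 - X ^ (i + 1)) ≡ ∏ i ∈ s \ range m, (1 : R⟦X⟧)
      [SMOD Ideal.span {X ^ D}] := by
    refine SModEq.prod fun i hi => ?_
    have hi : m ≤ i := by simpa using (mem_sdiff.1 hi).2
    simpa using SModEq.rfl.sub (X_pow_smodEq_zero (R := R) (by omega : D ≤ i + 1))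
  rw [prod_const_one] at h
  rw [qPoch, ← prod_sdiff hs]
  simpa using h.mul (SModEq.refl (∏ i ∈ range m, (1 - X ^ (i + 1) : R⟦X⟧)))

lemma pentagonalSeries_smodEq_qPoch {m : ℕ} (hD : D ≤ m + 1) :
    pentagonalSeries R ≡ qPoch X m [SMOD Ideal.span {X ^ D}] := by
  refine smodEq_X_pow_iff.2 fun d hd => ?_
  obtain ⟨s, hs⟩ := Filter.eventually_atTop.1 (coeff_prod_one_sub_X_pow_eventually_eq R d)
  rw [← hs (s ∪ range m) subset_union_left]
  exact smodEq_X_pow_iff.1 (prod_one_sub_X_pow_smodEq_qPoch subset_union_right hD) d hd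

lemma constantCoeff_pentagonalSeries : constantCoeff (pentagonalSeries R) = 1 := by
  simpa [pentagonal] using coeff_pentagonalSeries_pentagonal R 0

lemma isUnit_pentagonalSeries : IsUnit (pentagonalSeries R) := by
  simp [isUnit_iff_constantCoeff, constantCoeff_pentagonalSeries]

lemma qBinom_X_mul_pentagonalSeries_smodEq {a b : ℕ} (ha : D ≤ a + 1) (hb : D ≤ b + 1) :
    qBinom X (a + b) a * pentagonalSeries R ≡ 1 [SMOD Ideal.span {X ^ D}] := by
  have h : qBinom X (a + b) a * pentagonalSeries R * pentagonalSeries R ≡ 1 * pentagonalSeries R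
      [SMOD Ideal.span {X ^ D}] := by
    rw [one_mul]
    calc _ ≡ qBinom X (a + b) a * qPoch X a * qPoch X b [SMOD Ideal.span {(X : R⟦X⟧) ^ D}] :=
          ((SModEq.refl (qBinom (X : R⟦X⟧) (a + b) a)).mul
            (pentagonalSeries_smodEq_qPoch ha)).mul (pentagonalSeries_smodEq_qPoch hb)
      _ = qPoch X (a + b) := qBinom_mul_qPoch_mul_qPoch X a b
      _ ≡ pentagonalSeries R [SMOD Ideal.span {(X : R⟦X⟧) ^ D}] :=
          (pentagonalSeries_smodEq_qPoch (by omega)).symm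
  have hu := isUnit_pentagonalSeries (R := R)
  simpa [mul_assoc, hu.mul_val_inv] using h.mul (SModEq.refl (↑hu.unit⁻¹ : R⟦X⟧))

/-- **Jacobi's identity**, modulo `X ^ D`; recall `pentagonalSeries R = ∏ (1 - X ^ (i + 1))`. -/
theorem pentagonalSeries_pow_three_smodEq (D : ℕ) :
    pentagonalSeries R ^ 3 ≡ ∑ l ∈ range D, C ((-1) ^ l * (2 * l + 1) : R) * X ^ triangle l
      [SMOD Ideal.span {X ^ D}] := by
  have hsum := qPoch_sq_eq_sum (X : R⟦X⟧) (2 * D)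
  rw [show 2 * D + 1 = D + (D + 1) by ring, sum_range_add] at hsum
  have hE : pentagonalSeries R ≡ qPoch X (2 * D) [SMOD Ideal.span {(X : R⟦X⟧) ^ D}] :=
    pentagonalSeries_smodEq_qPoch (by omega)
  have hcube : pentagonalSeries R ^ 3 ≡ qPoch X (2 * D) ^ 2 * pentagonalSeries R
      [SMOD Ideal.span {(X : R⟦X⟧) ^ D}] := by
    rw [pow_succ]
    exact (hE.pow 2).mul (SModEq.refl _)
  have hlow : ∀ l ∈ range D, (-1 : R⟦X⟧) ^ l * (2 * (l : R⟦X⟧) + 1) * X ^ triangle l *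
      qBinom X (2 * (2 * D) + 1) (2 * D - l) * pentagonalSeries R ≡
      C ((-1) ^ l * (2 * l + 1) : R) * X ^ triangle l [SMOD Ideal.span {(X : R⟦X⟧) ^ D}] := by
    intro l hl
    have hl : l < D := mem_range.1 hl
    have h := qBinom_X_mul_pentagonalSeries_smodEq (R := R) (D := D) (a := 2 * D - l)
      (b := 2 * D + l + 1) (by omega) (by omega)
    rw [show 2 * D - l + (2 * D + l + 1) = 2 * (2 * D) + 1 by omega] at h
    have := (SModEq.refl ((-1 : R⟦X⟧) ^ l * (2 * (l : R⟦X⟧) + 1) * X ^ triangle l)).mul h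
    rw [mul_one, ← mul_assoc] at this
    simpa only [map_mul, map_pow, map_neg, map_one, map_add, map_natCast, map_ofNat] using this
  have hhigh : ∀ i ∈ range (D + 1), (-1 : R⟦X⟧) ^ (D + i) * (2 * ((D + i : ℕ) : R⟦X⟧) + 1) *
      X ^ triangle (D + i : ℕ) * qBinom X (2 * (2 * D) + 1) (2 * D - (D + i)) *
      pentagonalSeries R ≡ 0 [SMOD Ideal.span {(X : R⟦X⟧) ^ D}] := by
    intro i _
    have h := X_pow_smodEq_zero (R := R) ((Nat.le_add_right D i).trans (le_triangle (D + i)))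
    have := ((SModEq.refl ((-1 : R⟦X⟧) ^ (D + i) * (2 * ((D + i : ℕ) : R⟦X⟧) + 1))).mul h).mul
      (SModEq.refl (qBinom X (2 * (2 * D) + 1) (2 * D - (D + i)) * pentagonalSeries R))
    rwa [mul_zero, zero_mul, ← mul_assoc] at this
  have hhigh' := SModEq.sum hhigh
  rw [sum_const_zero] at hhigh'
  refine hcube.trans ?_
  rw [hsum, add_mul, sum_mul, sum_mul]
  simpa only [add_zero] using (SModEq.sum hlow).add hhigh'

end Jacobi

section Ramanujan

open PowerSeries
open scoped PowerSeries.WithPiTopology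

noncomputable def partitionSeries (R : Type*) [CommRing R] : R⟦X⟧ :=
  PowerSeries.mk fun n => (Fintype.card n.Partition : R)

theorem partitionSeries_mul_pentagonalSeries (R : Type*) [CommRing R] :
    partitionSeries R * pentagonalSeries R = 1 := by
  let _ : TopologicalSpace R := ⊥
  have _ : DiscreteTopology R := ⟨rfl⟩
  have hP := Nat.Partition.hasProd_powerSeriesMk_card_restricted R (fun _ => True)
  simp only [if_true, Nat.Partition.restricted, implies_true, filter_true, card_univ] at hP
  have h := hP.mul (WithPiTopology.hasProd_one_sub_X_pow R)
  simp only [pow_mul, WithPiTopology.tsum_pow_mul_one_sub_of_constantCoeff_eq_zero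
    (by simp : constantCoeff (X ^ (_ + 1) : R⟦X⟧) = 0)] at h
  exact h.unique hasProd_one

theorem coeff_pow_expChar_eq_zero {R : Type*} [CommRing R] (p : ℕ) [ExpChar R p] (f : R⟦X⟧)
    {n : ℕ} (hn : ¬ p ∣ n) : coeff n (f ^ p) = 0 := by
  rw [← MvPowerSeries.map_frobenius_expand p (expChar_ne_zero R p)]
  change (PowerSeries.map (frobenius R p) (expand p (expChar_ne_zero R p) f)).coeff n = 0
  rw [coeff_map, coeff_expand_of_not_dvd _ _ _ hn, map_zero]

theorem coeff_eq_zero_of_coeff_mul_eq_zero {R : Type*} [Semiring R] {m r : ℕ} {G F : R⟦X⟧}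
    (hG₀ : IsUnit (constantCoeff G)) (hG : ∀ n, ¬ m ∣ n → coeff n G = 0)
    (hGF : ∀ k, k % m = r → coeff k (G * F) = 0) (k : ℕ) (hk : k % m = r) : coeff k F = 0 := by
  induction k using Nat.strong_induction_on with
  | _ k ih =>
    have h := hGF k hk
    rw [coeff_mul, sum_eq_single (0, k)] at h
    · rwa [coeff_zero_eq_constantCoeff_apply, hG₀.mul_right_eq_zero] at h
    · rintro ⟨i, j⟩ hij hne
      rw [HasAntidiagonal.mem_antidiagonal] at hij
      by_cases hi : m ∣ i
      · obtain ⟨c, rfl⟩ := hi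
        have hc : m * c ≠ 0 := fun h0 => hne (Prod.ext h0 (by simp only at hij ⊢; omega))
        rw [ih j (by simp only at hij; omega) (by simp [← hk, ← hij]), mul_zero]
      · rw [hG i hi, zero_mul]
    · simp

lemma two_mul_add_one_eq_zero_of_pentagonal_add_triangle {t : ℤ} {l : ℕ}
    (h : (pentagonal t + triangle l) % 5 = 4) : (2 * l + 1 : ZMod 5) = 0 := by
  have hp := two_mul_natCast_pentagonal t
  have ht := two_mul_natCast_triangle l
  obtain ⟨q, hq⟩ : ∃ q, pentagonal t + triangle l = 5 * q + 4 :=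
    ⟨(pentagonal t + triangle l) / 5, by omega⟩
  have key : 3 * (2 * (l : ℤ) + 1) ^ 2 + (6 * t - 1) ^ 2 = 5 * (24 * q + 20) := by
    have hq' : (pentagonal t : ℤ) + triangle l = 5 * q + 4 := by exact_mod_cast hq
    linear_combination (-12) * ht - 12 * hp + 24 * hq'
  have key' := congrArg (Int.cast : ℤ → ZMod 5) key
  push_cast at key'
  rw [show (5 : ZMod 5) = 0 from rfl, zero_mul] at key'
  have hsq : ∀ u w : ZMod 5, 3 * u ^ 2 + w ^ 2 = 0 → u = 0 := by decide
  exact hsq _ _ key'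

lemma coeff_pentagonalSeries_pow_four_eq_zero {k : ℕ} (hk : k % 5 = 4) :
    coeff k (pentagonalSeries (ZMod 5) ^ 4) = 0 := by
  rw [pow_succ', coeff_mul]
  refine sum_eq_zero fun ⟨i, j⟩ hij => ?_
  rw [HasAntidiagonal.mem_antidiagonal] at hij
  rw [smodEq_X_pow_iff.1 (pentagonalSeries_pow_three_smodEq (k + 1)) j (by omega), map_sum,
    mul_sum]
  refine sum_eq_zero fun l _ => ?_
  rw [coeff_C_mul_X_pow]
  split_ifs with hj
  · by_cases hi : i ∈ Set.range pentagonal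
    · obtain ⟨t, rfl⟩ := hi
      rw [two_mul_add_one_eq_zero_of_pentagonal_add_triangle (t := t) (l := l) (by omega), mul_zero,
        mul_zero]
    · rw [coeff_pentagonalSeries_eq_zero _ hi, zero_mul]
  · rw [mul_zero]

end Ramanujan

/-- Ramanujan's congruence: `p(5n+4) ≡ 0 (mod 5)` where `p` counts partitions. -/
theorem ramanujan_mod_five (n : ℕ) :
    5 ∣ Fintype.card (Nat.Partition (5 * n + 4)) := by
  have : Fact (Nat.Prime 5) := ⟨by norm_num⟩
  set E := PowerSeries.pentagonalSeries (ZMod 5)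
  have hE₀ : IsUnit (PowerSeries.constantCoeff (E ^ 5)) := by
    simp [E, constantCoeff_pentagonalSeries]
  have hE5P : E ^ 5 * partitionSeries (ZMod 5) = E ^ 4 := by
    linear_combination E ^ 4 * partitionSeries_mul_pentagonalSeries (ZMod 5)
  have h := coeff_eq_zero_of_coeff_mul_eq_zero hE₀ (fun _ => coeff_pow_expChar_eq_zero 5 E)
    (fun _ hk => hE5P ▸ coeff_pentagonalSeries_pow_four_eq_zero hk) (5 * n + 4) (by omega)
  rw [partitionSeries, PowerSeries.coeff_mk] at h
  exact (ZMod.natCast_eq_zero_iff _ 5).1 h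
end

section
/- For every natural number n, cφ₂(2n+1) is divisible by 2, where cφ₂(m) denotes the number of 2-colored generalized Frobenius partitions of m. -/
open Finset PowerSeries

/-- The quadratic form `Q(m₁,…,m_r) = ∑ mᵢ² + ∑_{i<j} mᵢ mⱼ`. -/
def frobQ {r : ℕ} (v : Fin r → ℤ) : ℤ :=
  (∑ i, v i ^ 2) + ∑ i, ∑ j ∈ Finset.Ioi i, v i * v j

/-- The `n`-th coefficient of the theta series `∑_{m₁,…,m_{k-1} ∈ ℤ} q^{Q(m₁,…,m_{k-1})}`,
i.e. the number of integer vectors of length `k-1` on which `Q` takes the value `n`. -/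
noncomputable def frobThetaCoeff (k n : ℕ) : ℕ :=
  Nat.card {v : Fin (k - 1) → ℤ // frobQ v = (n : ℤ)}

/-- `c : ℕ → ℤ` is the coefficient sequence of the `k`-colored generalized Frobenius
partition generating function, i.e. `∑ c(n) qⁿ = (∑_{m ∈ ℤ^{k-1}} q^{Q(m)}) / ∏_{n≥1}(1-qⁿ)^k`
as formal power series: multiplying by a sufficiently long truncation of `∏ (1-qⁿ)^k`
recovers each theta coefficient. -/
def IsCphi (k : ℕ) (c : ℕ → ℤ) : Prop :=
  ∀ n : ℕ,
    (PowerSeries.coeff (R := ℤ) n)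
        ((PowerSeries.mk fun m => c m) *
          ∏ i ∈ Finset.range (n + 1), (1 - (PowerSeries.X : PowerSeries ℤ) ^ (i + 1)) ^ k) =
      frobThetaCoeff k n

/-- Odd theta coefficients are even. -/
lemma theta_two_odd_even (m : ℕ) (hm : Odd m) : 2 ∣ frobThetaCoeff 2 m := by
  have hQ : ∀ v : Fin 1 → ℤ, frobQ v = v 0 ^ 2 := by intro v; simp [frobQ]
  have e : {v : Fin 1 → ℤ // frobQ v = (m : ℤ)} ≃ {x : ℤ // x ^ 2 = (m : ℤ)} :=
    (Equiv.funUnique (Fin 1) ℤ).subtypeEquiv (by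
      intro v; rw [hQ v]; rfl)
  have hcard : frobThetaCoeff 2 m = Nat.card {x : ℤ // x ^ 2 = (m : ℤ)} := by
    unfold frobThetaCoeff
    exact Nat.card_congr e
  rw [hcard]
  by_cases h : ∃ s : ℤ, 0 < s ∧ s ^ 2 = (m : ℤ)
  · obtain ⟨s, hs, hsq⟩ := h
    have hset : {x : ℤ | x ^ 2 = (m : ℤ)} = {s, -s} := by
      ext x
      simp only [Set.mem_setOf_eq, Set.mem_insert_iff, Set.mem_singleton_iff]
      rw [← hsq, sq_eq_sq_iff_eq_or_eq_neg]
    have : Nat.card {x : ℤ // x ^ 2 = (m : ℤ)} = 2 := by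
      have : {x : ℤ // x ^ 2 = (m : ℤ)} = ↥{x : ℤ | x ^ 2 = (m : ℤ)} := rfl
      rw [this, Nat.card_coe_set_eq, hset, Set.ncard_pair (by omega)]
    rw [this]
  · have hempty : IsEmpty {x : ℤ // x ^ 2 = (m : ℤ)} := by
      constructor
      rintro ⟨x, hx⟩
      apply h
      refine ⟨|x|, ?_, by rw [sq_abs]; exact hx⟩
      rcases eq_or_ne x 0 with rfl | hx0
      · exfalso
        have : (m : ℤ) = 0 := by simpa using hx.symm
        have : m = 0 := by exact_mod_cast this
        simp [this] at hm
      · exact abs_pos.mpr hx0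
    rw [Nat.card_of_isEmpty]
    exact dvd_zero 2

/-- Odd coefficients of `∏ (1 + X^{2(i+1)})` over `ZMod 2` vanish. -/
lemma odd_coeff_prod (N q : ℕ) (hq : Odd q) :
    coeff (R := ZMod 2) q (∏ i ∈ Finset.range N,
      ((1 : PowerSeries (ZMod 2)) + X ^ (2 * (i + 1)))) = 0 := by
  induction N generalizing q with
  | zero =>
      simp only [Finset.range_zero, Finset.prod_empty, coeff_one]
      rw [if_neg]
      rintro rfl; simp at hq
  | succ N ih =>
      rw [Finset.prod_range_succ, coeff_mul]
      apply Finset.sum_eq_zero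
      rintro ⟨a, b⟩ hab
      rw [Finset.HasAntidiagonal.mem_antidiagonal] at hab
      rcases Nat.even_or_odd b with hb | hb
      · have ha : Odd a := by
          rcases hb with ⟨t, ht⟩; rcases hq with ⟨u, hu⟩; exact ⟨u - t, by omega⟩
        rw [ih a ha, zero_mul]
      · have : coeff (R := ZMod 2) b ((1 : PowerSeries (ZMod 2)) + X ^ (2 * (N + 1))) = 0 := by
          rw [map_add, coeff_one, coeff_X_pow, if_neg, if_neg, add_zero]
          · rcases hb with ⟨t, ht⟩; omega
          · rintro rfl; simp at hb
        rw [this, mul_zero]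

/-- Dewar: `cφ₂(2n+1) ≡ 0 (mod 2)`. -/
theorem cphi_two_mod_two (c : ℕ → ℤ) (hc : IsCphi 2 c) (n : ℕ) :
    2 ∣ c (2 * n + 1) := by
  have h2 : (2 : PowerSeries (ZMod 2)) = 0 := by
    rw [← map_ofNat (C (R := ZMod 2)) 2, show (2 : ZMod 2) = 0 by decide, map_zero]
  have hsq : ∀ j : ℕ, ((1 : PowerSeries (ZMod 2)) - X ^ j) ^ 2 = 1 + X ^ (2 * j) := by
    intro j
    have : ((1 : PowerSeries (ZMod 2)) - X ^ j) ^ 2 = 1 - 2 * X ^ j + (X ^ j) ^ 2 := by ring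
    rw [this, h2, ← pow_mul, mul_comm j 2]; ring
  -- key: odd-index coefficients are even
  have key : ∀ m : ℕ, Odd m → ((c m : ZMod 2)) = 0 := by
    intro m
    induction m using Nat.strong_induction_on with
    | _ m ih =>
    intro hm
    have h := hc m
    -- map both sides to ZMod 2
    have h' := congrArg (Int.castRingHom (ZMod 2)) h
    rw [← PowerSeries.coeff_map] at h'
    rw [map_mul, map_prod] at h'
    have hmk : PowerSeries.map (Int.castRingHom (ZMod 2)) (PowerSeries.mk fun m => c m)
        = PowerSeries.mk (fun m => ((c m : ZMod 2))) := by
      ext k; simp [coeff_mk]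
    have hfac : ∀ i ∈ Finset.range (m + 1),
        PowerSeries.map (Int.castRingHom (ZMod 2))
          ((1 - (PowerSeries.X : PowerSeries ℤ) ^ (i + 1)) ^ 2)
        = (1 : PowerSeries (ZMod 2)) + X ^ (2 * (i + 1)) := by
      intro i _
      rw [map_pow, map_sub, map_one, map_pow, PowerSeries.map_X, hsq]
    rw [hmk, Finset.prod_congr rfl hfac] at h'
    have hθ : ((frobThetaCoeff 2 m : ℤ) : ZMod 2) = 0 := by
      obtain ⟨t, ht⟩ := theta_two_odd_even m hm
      rw [ht]
      push_cast
      rw [show ((2 : ZMod 2)) = 0 by decide]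
      ring
    simp only [eq_intCast] at h'
    rw [hθ] at h'
    -- expand the coefficient of the product
    rw [coeff_mul] at h'
    set G : PowerSeries (ZMod 2) :=
      ∏ i ∈ Finset.range (m + 1), ((1 : PowerSeries (ZMod 2)) + X ^ (2 * (i + 1))) with hG
    simp only [coeff_mk] at h'
    have hsum : ∑ p ∈ Finset.HasAntidiagonal.antidiagonal m,
        ((c p.1 : ZMod 2)) * coeff (R := ZMod 2) p.2 G
        = (c m : ZMod 2) * coeff (R := ZMod 2) 0 G := by
      apply Finset.sum_eq_single_of_mem (m, 0)
      · simp
      · rintro ⟨a, b⟩ hab hne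
        rw [Finset.HasAntidiagonal.mem_antidiagonal] at hab
        rcases Nat.even_or_odd b with hb | hb
        · have hb0 : b ≠ 0 := by rintro rfl; exact hne (by simp [← hab])
          have ha : Odd a := by
            rcases hb with ⟨t, ht⟩; rcases hm with ⟨u, hu⟩; exact ⟨u - t, by omega⟩
          have : a < m := by omega
          rw [ih a this ha, zero_mul]
        · rw [odd_coeff_prod (m + 1) b hb, mul_zero]
    rw [hsum] at h'
    have hG0 : coeff (R := ZMod 2) 0 G = 1 := by
      rw [hG, coeff_zero_eq_constantCoeff, map_prod]
      apply Finset.prod_eq_one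
      intro i _
      rw [map_add, map_one, map_pow, constantCoeff_X, zero_pow (by omega), add_zero]
    rw [hG0, mul_one] at h'
    exact h'
  have := key (2 * n + 1) ⟨n, by omega⟩
  exact (ZMod.intCast_zmod_eq_zero_iff_dvd _ 2).mp this
end

section
/- For every natural number n, cφ₂(5n+3) is divisible by 5. -/
open Finset PowerSeries

namespace Dewar

instance : Fact (Nat.Prime 5) := ⟨by norm_num⟩

set_option synthInstance.maxHeartbeats 1000000 in
instance R5dom : IsDomain (PowerSeries (ZMod 5)) := inferInstance

abbrev R5 : Type := PowerSeries (ZMod 5)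

noncomputable def Pf (n : ℕ) : R5 := ∏ i ∈ Finset.range n, (1 - (X : R5)^(i+1))
noncomputable def Df (N m : ℕ) : R5 := ∏ i ∈ Finset.range m, (1 - (X : R5)^(N-i))

noncomputable def qb : ℕ → ℕ → R5
  | _, 0 => 1
  | 0, _+1 => 0
  | N+1, a+1 => qb N a + X^(a+1) * qb N (a+1)

@[simp] lemma qb_zero (N : ℕ) : qb N 0 = 1 := by cases N <;> rfl

lemma qb_succ (N a : ℕ) : qb (N+1) (a+1) = qb N a + X^(a+1) * qb N (a+1) := rfl

lemma qb_eq_zero : ∀ {N a : ℕ}, N < a → qb N a = 0 := by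
  intro N
  induction N with
  | zero => intro a ha; cases a with
    | zero => omega
    | succ b => rfl
  | succ N ih =>
    intro a ha
    cases a with
    | zero => omega
    | succ b =>
      rw [qb_succ, ih (by omega), ih (by omega)]
      ring

lemma Pf_succ (n : ℕ) : Pf (n+1) = Pf n * (1 - X^(n+1)) := Finset.prod_range_succ _ _

lemma Df_succ (N m : ℕ) : Df N (m+1) = Df N m * (1 - X^(N-m)) := Finset.prod_range_succ _ _

lemma Df_succ_left (N m : ℕ) : Df (N+1) (m+1) = (1 - X^(N+1)) * Df N m := by
  rw [Df, Finset.prod_range_succ']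
  simp only [Nat.succ_sub_succ_eq_sub, Nat.sub_zero]
  rw [mul_comm, Df]

lemma Df_eq_zero {N m : ℕ} (h : N < m) : Df N m = 0 := by
  apply Finset.prod_eq_zero (Finset.mem_range.mpr h)
  simp

lemma qb_mul_Pf : ∀ N m, qb N m * Pf m = Df N m := by
  intro N
  induction N with
  | zero =>
    intro m
    cases m with
    | zero => simp [qb, Pf, Df]
    | succ b =>
      rw [show qb 0 (b+1) = 0 from rfl, Df_eq_zero (by omega)]
      ring
  | succ N ih =>
    intro m
    cases m with
    | zero => simp [Pf, Df]
    | succ b =>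
      rw [qb_succ, Pf_succ, Df_succ_left, add_mul, mul_assoc (X^(b+1)),
        show qb N b * (Pf b * (1 - X^(b+1))) = (qb N b * Pf b) * (1-X^(b+1)) by ring,
        ih b]
      have h2 : qb N (b+1) * (Pf b * (1 - X^(b+1))) = Df N (b+1) := by
        rw [← Pf_succ]; exact ih (b+1)
      rw [h2, Df_succ]
      by_cases hb : b ≤ N
      · have : X^(b+1) * (X:R5)^(N-b) = X^(N+1) := by
          rw [← pow_add]; congr 1; omega
        linear_combination (-(Df N b)) * this
      · rw [Df_eq_zero (show N < b by omega)]
        ring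


lemma constantCoeff_Pf (n : ℕ) : constantCoeff (R := ZMod 5) (Pf n) = 1 := by
  rw [Pf, map_prod]
  apply Finset.prod_eq_one
  intro i _
  simp

lemma Pf_ne_zero (n : ℕ) : Pf n ≠ 0 := by
  intro h
  have := constantCoeff_Pf n
  rw [h] at this
  exact absurd this (by decide)

lemma isUnit_Pf (n : ℕ) : IsUnit (Pf n) := by
  rw [PowerSeries.isUnit_iff_constantCoeff, constantCoeff_Pf]
  exact isUnit_one

lemma pascal2 (N a : ℕ) : qb (N+1) (a+1) = X^(N-a) * qb N a + qb N (a+1) := by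
  by_cases h : a ≤ N
  · apply mul_right_cancel₀ (Pf_ne_zero (a+1))
    have e2 := qb_mul_Pf N a
    have e3 := qb_mul_Pf N (a+1)
    have ps := Pf_succ a
    have ds := Df_succ N a
    have dl := Df_succ_left N a
    have hx : (X:R5)^(N-a) * X^(a+1) = X^(N+1) := by
      rw [← pow_add]; congr 1; omega
    rw [qb_mul_Pf, dl, ps]
    have e3' : qb N (a+1) * (Pf a * (1 - X^(a+1))) = Df N a * (1 - X^(N-a)) := by
      rw [← ps, e3, ds]
    linear_combination (-1 : R5) * e3' - X^(N-a)*(1-X^(a+1))*e2 + (Df N a) * hx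
  · rw [qb_eq_zero (show N+1 < a+1 by omega), qb_eq_zero (show N < a by omega),
      qb_eq_zero (show N < a+1 by omega)]
    ring

lemma dp (n m : ℕ) : qb (2*n+2) (m+2) =
    X^(2*n-m) * qb (2*n) m + (1+X^(2*n+1)) * qb (2*n) (m+1) + X^(m+2) * qb (2*n) (m+2) := by
  have h1 : qb (2*n+2) (m+2) = qb (2*n+1) (m+1) + X^(m+2) * qb (2*n+1) (m+2) := qb_succ _ _
  rw [h1, pascal2 (2*n) m, pascal2 (2*n) (m+1)]
  by_cases h : m+1 ≤ 2*n
  · have hx : (X:R5)^(m+2) * X^(2*n-(m+1)) = X^(2*n+1) := by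
      rw [← pow_add]; congr 1; omega
    linear_combination (qb (2*n) (m+1)) * hx
  · rw [qb_eq_zero (show 2*n < m+1 by omega), qb_eq_zero (show 2*n < m+2 by omega)]
    ring

def tri : ℕ → ℕ
  | 0 => 0
  | k+1 => tri k + k + 1

lemma tri_succ (k : ℕ) : tri (k+1) = tri k + k + 1 := rfl

lemma le_tri (k : ℕ) : k ≤ tri k := by
  induction k with
  | zero => simp [tri]
  | succ k ih => rw [tri_succ]; omega

lemma tri_injective : Function.Injective tri := by
  have h : StrictMono tri := strictMono_nat_of_lt_succ (by intro n; rw [tri_succ]; omega)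
  exact h.injective

lemma eight_tri (k : ℕ) : (2*k+1)^2 = 8 * tri k + 1 := by
  induction k with
  | zero => simp [tri]
  | succ k ih =>
    have h : (2*(k+1)+1)^2 = (2*k+1)^2 + 8*(k+1) := by ring
    rw [h, ih, tri_succ]
    ring

def e (n m : ℕ) : ℕ := if n ≤ m then tri (m - n) else tri (n - m - 1)

lemma e_ge (n m : ℕ) (h : n ≤ m) : e n m = tri (m - n) := if_pos h
lemma e_lt (n m : ℕ) (h : m < n) : e n m = tri (n - m - 1) := if_neg (by omega)

lemma e_shift (n m : ℕ) : e (n+1) (m+1) = e n m := by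
  unfold e
  rcases le_or_gt n m with h | h
  · rw [if_pos (by omega), if_pos h, Nat.succ_sub_succ]
  · rw [if_neg (by omega), if_neg (by omega), Nat.succ_sub_succ]

lemma exp_a (n m : ℕ) (h : m ≤ 2*n) : n+1+ e n m = 2*n - m + e (n+1) (m+2) := by
  rcases le_or_gt n m with h1 | h1
  · obtain ⟨k, rfl⟩ := Nat.exists_eq_add_of_le h1
    rw [e_ge _ _ (by omega), e_ge _ _ (by omega),
      show n + k - n = k by omega, show n + k + 2 - (n+1) = k + 1 by omega, tri_succ]
    omega
  · rcases le_or_gt n (m+1) with h2 | h2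
    · have : n = m+1 := by omega
      subst this
      rw [e_lt _ _ (by omega), e_ge _ _ (by omega)]
      simp [tri]
      omega
    · rw [e_lt _ _ (by omega), e_lt _ _ (by omega)]
      have h4 : tri (n - m - 1) = tri (n+1-(m+2)-1) + (n+1-(m+2)-1) + 1 := by
        rw [show n-m-1 = (n+1-(m+2)-1)+1 by omega]
        exact tri_succ _
      rw [h4]
      omega

lemma exp_c (n m : ℕ) : m+2+ e (n+1) (m+2) = n + e n (m+2) := by
  rcases le_or_gt n (m+2) with h1 | h1
  · rcases le_or_gt (n+1) (m+2) with h2 | h2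
    · rw [e_ge _ _ (by omega), e_ge _ _ (by omega),
        show m + 2 - n = (m + 2 - (n+1)) + 1 by omega, tri_succ]
      omega
    · have : n = m+2 := by omega
      subst this
      rw [e_lt _ _ (by omega), e_ge _ _ (by omega)]
      simp [tri]
  · rw [e_lt _ _ (by omega), e_lt _ _ (by omega)]
    have h4 : tri (n+1-(m+2)-1) = tri (n-(m+2)-1) + (n-(m+2)-1) + 1 := by
      rw [show n+1-(m+2)-1 = (n-(m+2)-1)+1 by omega]
      exact tri_succ _
    rw [h4]
    omega

lemma GR' (n m : ℕ) :
    qb (2*n+2) (m+2) * X^(e (n+1) (m+2)) =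
      X^(n+1+ e n m) * qb (2*n) m
        + (1+X^(2*n+1)) * qb (2*n) (m+1) * X^(e n (m+1))
        + X^(n + e n (m+2)) * qb (2*n) (m+2) := by
  have hb : e (n+1) (m+2) = e n (m+1) := e_shift n (m+1)
  have hdp := dp n m
  have hc : (X:R5)^(m+2) * X^(e (n+1) (m+2)) = X^(n + e n (m+2)) := by
    rw [← pow_add, exp_c]
  have hterm1 : (X:R5)^(2*n-m) * qb (2*n) m * X^(e (n+1) (m+2)) =
      X^(n+1+ e n m) * qb (2*n) m := by
    by_cases h : m ≤ 2*n
    · have hx : (X:R5)^(2*n-m) * X^(e (n+1) (m+2)) = X^(n+1+ e n m) := by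
        rw [← pow_add, ← exp_a n m h]
      calc (X:R5)^(2*n-m) * qb (2*n) m * X^(e (n+1) (m+2))
          = (X^(2*n-m) * X^(e (n+1) (m+2))) * qb (2*n) m := by ring
        _ = _ := by rw [hx]
    · rw [qb_eq_zero (show 2*n < m by omega)]; ring
  calc qb (2*n+2) (m+2) * X^(e (n+1) (m+2))
      = (X^(2*n-m) * qb (2*n) m + (1+X^(2*n+1)) * qb (2*n) (m+1)
          + X^(m+2) * qb (2*n) (m+2)) * X^(e (n+1) (m+2)) := by rw [← hdp]
    _ = X^(2*n-m) * qb (2*n) m * X^(e (n+1) (m+2))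
        + (1+X^(2*n+1)) * qb (2*n) (m+1) * X^(e (n+1) (m+2))
        + (X^(m+2) * X^(e (n+1) (m+2))) * qb (2*n) (m+2) := by ring
    _ = _ := by rw [hterm1, hc, hb]

noncomputable def gg (n m : ℕ) : R5 := (-1:R5)^(n+m) * qb (2*n) m * X^(e n m)

noncomputable def Ssum (n : ℕ) : R5 := ∑ m ∈ Finset.range (2*n+1), (m : R5) * gg n m
noncomputable def Usum (n : ℕ) : R5 := ∑ m ∈ Finset.range (2*n+1), gg n m

lemma gg_hi (n j : ℕ) (h : 2*n < j) : gg n j = 0 := by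
  simp [gg, qb_eq_zero h]

lemma gg_rec (n m : ℕ) : gg (n+1) (m+2) =
    -(X^(n+1) * gg n m) + (1+X^(2*n+1)) * gg n (m+1) - X^n * gg n (m+2) := by
  unfold gg
  rw [show 2*(n+1) = 2*n+2 by ring]
  have hs1 : (-1:R5)^(n+1+(m+2)) = -(-1)^(n+m) := by
    rw [show n+1+(m+2) = (n+m)+3 by omega, pow_add]
    norm_num
  have hs2 : (-1:R5)^(n+(m+1)) = -(-1)^(n+m) := by
    rw [show n+(m+1) = (n+m)+1 by omega, pow_succ]
    ring
  have hs3 : (-1:R5)^(n+(m+2)) = (-1)^(n+m) := by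
    rw [show n+(m+2) = (n+m)+2 by omega, pow_add]
    norm_num
  rw [hs1, hs2, hs3]
  have h := GR' n m
  linear_combination (-(-1:R5)^(n+m)) * h

lemma sum_shift1 (N : ℕ) (f : ℕ → R5) :
    ∑ m ∈ Finset.range N, f (m+1) = (∑ m ∈ Finset.range (N+1), f m) - f 0 := by
  rw [Finset.sum_range_succ' f N]
  ring

lemma sum_shift2 (N : ℕ) (f : ℕ → R5) :
    ∑ m ∈ Finset.range (N+2), f m = f 0 + f 1 + ∑ m ∈ Finset.range N, f (m+2) := by
  rw [Finset.sum_range_succ' f (N+1), sum_shift1 N (fun m => f (m+1))]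
  ring

lemma Usum_aux1 (k : ℕ) :
    ∑ m ∈ Finset.range (2*k+1), gg k (m+1) = Usum k - gg k 0 := by
  rw [sum_shift1, Finset.sum_range_succ, gg_hi k (2*k+1) (by omega), Usum]
  ring

lemma Usum_aux2 (k : ℕ) :
    ∑ m ∈ Finset.range (2*k+1), gg k (m+2) = Usum k - gg k 0 - gg k 1 := by
  have h1 : ∑ m ∈ Finset.range (2*k+1), gg k (m+2)
      = (∑ m ∈ Finset.range (2*k+2), gg k (m+1)) - gg k 1 := by
    rw [sum_shift1 (2*k+1) (fun m => gg k (m+1))]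
  rw [h1, sum_shift1, Finset.sum_range_succ, Finset.sum_range_succ,
    gg_hi k (2*k+1) (by omega), gg_hi k (2*k+2) (by omega), Usum]
  ring

lemma Usum_succ (k : ℕ) : Usum (k+1) = gg (k+1) 0 + gg (k+1) 1
    - X^(k+1) * Usum k + (1+X^(2*k+1)) * (Usum k - gg k 0)
    - X^k * (Usum k - gg k 0 - gg k 1) := by
  have h0 : Usum (k+1) = gg (k+1) 0 + gg (k+1) 1
      + ∑ m ∈ Finset.range (2*k+1), gg (k+1) (m+2) := by
    rw [Usum, show 2*(k+1)+1 = 2*k+1+2 by ring, sum_shift2]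
  rw [h0, Finset.sum_congr rfl (fun m _ => gg_rec k m)]
  rw [Finset.sum_sub_distrib, Finset.sum_add_distrib, Finset.sum_neg_distrib,
    ← Finset.mul_sum, ← Finset.mul_sum, ← Finset.mul_sum]
  rw [Usum_aux1, Usum_aux2]
  have : ∑ m ∈ Finset.range (2*k+1), gg k m = Usum k := rfl
  rw [this]
  ring

lemma Ssum_aux0 (k : ℕ) :
    ∑ m ∈ Finset.range (2*k+1), ((m:R5)+2) * gg k m = Ssum k + 2 * Usum k := by
  have h : ∀ m ∈ Finset.range (2*k+1), ((m:R5)+2) * gg k m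
      = (m:R5) * gg k m + 2 * gg k m := fun m _ => by ring
  rw [Finset.sum_congr rfl h, Finset.sum_add_distrib, ← Finset.mul_sum]
  rfl

lemma Ssum_aux1 (k : ℕ) :
    ∑ m ∈ Finset.range (2*k+1), ((m:R5)+2) * gg k (m+1)
      = Ssum k + (Usum k - gg k 0) := by
  have h : ∀ m ∈ Finset.range (2*k+1), ((m:R5)+2) * gg k (m+1)
      = (((m+1:ℕ)):R5) * gg k (m+1) + gg k (m+1) := fun m _ => by push_cast; ring
  rw [Finset.sum_congr rfl h, Finset.sum_add_distrib, Usum_aux1]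
  rw [sum_shift1 (2*k+1) (fun m => (m:R5) * gg k m)]
  rw [Finset.sum_range_succ, gg_hi k (2*k+1) (by omega)]
  have : (∑ m ∈ Finset.range (2*k+1), (m:R5) * gg k m) = Ssum k := rfl
  rw [this]
  push_cast
  ring

lemma Ssum_aux2 (k : ℕ) :
    ∑ m ∈ Finset.range (2*k+1), ((m:R5)+2) * gg k (m+2) = Ssum k - gg k 1 := by
  have h2 := sum_shift2 (2*k+1) (fun m => (m:R5) * gg k m)
  rw [Finset.sum_range_succ, Finset.sum_range_succ, gg_hi k (2*k+1) (by omega),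
    gg_hi k (2*k+2) (by omega)] at h2
  -- h2 : ∑ range (2k+3) = 0*gg k 0 + 1*gg k 1 + ∑ range(2k+1) ↑(m+2) gg k (m+2)
  have h3 : (∑ m ∈ Finset.range (2*k+1), (m:R5) * gg k m) = Ssum k := rfl
  rw [h3] at h2
  push_cast at h2
  linear_combination (-1 : R5) * h2

lemma Ssum_succ (k : ℕ) : Ssum (k+1) = gg (k+1) 1
    - X^(k+1) * (Ssum k + 2 * Usum k)
    + (1+X^(2*k+1)) * (Ssum k + (Usum k - gg k 0))
    - X^k * (Ssum k - gg k 1) := by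
  have h0 : Ssum (k+1) = ((0:ℕ):R5) * gg (k+1) 0 + ((1:ℕ):R5) * gg (k+1) 1
      + ∑ m ∈ Finset.range (2*k+1), (((m+2:ℕ)):R5) * gg (k+1) (m+2) := by
    rw [Ssum, show 2*(k+1)+1 = 2*k+1+2 by ring]
    exact sum_shift2 (2*k+1) (fun m => (m:R5) * gg (k+1) m)
  rw [h0]
  have h1 : ∀ m ∈ Finset.range (2*k+1), (((m+2:ℕ)):R5) * gg (k+1) (m+2)
      = -(X^(k+1) * (((m:R5)+2) * gg k m))
        + (1+X^(2*k+1)) * (((m:R5)+2) * gg k (m+1))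
        - X^k * (((m:R5)+2) * gg k (m+2)) := by
    intro m _
    rw [gg_rec k m]
    push_cast
    ring
  rw [Finset.sum_congr rfl h1, Finset.sum_sub_distrib, Finset.sum_add_distrib,
    Finset.sum_neg_distrib, ← Finset.mul_sum, ← Finset.mul_sum, ← Finset.mul_sum,
    Ssum_aux0, Ssum_aux1, Ssum_aux2]
  push_cast
  ring

lemma qb_one (N : ℕ) : qb (N+1) 1 = 1 + X * qb N 1 := by
  rw [show (1:ℕ) = 0+1 from rfl, qb_succ, qb_zero, pow_one]

lemma qb1_step (N : ℕ) : qb (N+1) 1 = qb N 1 + X^N := by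
  induction N with
  | zero =>
    rw [qb_one, show qb 0 1 = (0:R5) from rfl]
    simp
  | succ N ih =>
    calc qb (N+1+1) 1 = 1 + X * qb (N+1) 1 := qb_one _
      _ = 1 + X * (qb N 1 + X^N) := by rw [ih]
      _ = (1 + X * qb N 1) + X^(N+1) := by ring
      _ = qb (N+1) 1 + X^(N+1) := by rw [qb_one]

lemma e_n0 (k : ℕ) : e (k+1) 0 = tri k := by
  rw [e_lt _ _ (by omega)]
  congr 1

lemma gg_n0 (k : ℕ) : gg (k+1) 0 = (-1:R5)^(k+1) * X^(tri k) := by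
  unfold gg
  rw [e_n0, qb_zero, Nat.add_zero]
  ring

lemma e_n1 (k : ℕ) : e (k+1) 1 = tri (k-1) := by
  cases k with
  | zero => rw [e_ge _ _ (by omega)]
  | succ i =>
    rw [e_lt _ _ (by omega)]
    congr 1

lemma gg_n1 (k : ℕ) : gg (k+1) 1 = (-1:R5)^k * qb (2*k+2) 1 * X^(tri (k-1)) := by
  unfold gg
  rw [e_n1, show 2*(k+1) = 2*k+2 by ring]
  have hs : (-1:R5)^(k+1+1) = (-1)^k := by
    rw [show k+1+1 = k+2 by omega, pow_add]
    norm_num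
  rw [hs]

lemma tri_pred (n : ℕ) : n + tri (n-1) = tri n := by
  cases n with
  | zero => simp [tri]
  | succ i =>
    rw [Nat.add_sub_cancel, tri_succ]
    omega

lemma qb11 : qb 1 1 = 1 := by
  rw [show (1:ℕ) = 0+1 from rfl, qb_succ, qb_zero, show qb 0 (0+1) = 0 from rfl]
  ring

lemma Usum_one : Usum 1 = 0 := by
  have h : Usum 1 = gg 1 0 + gg 1 1 + gg 1 2 := by
    rw [Usum, show 2*1+1 = 3 by norm_num, Finset.sum_range_succ, Finset.sum_range_succ,
      Finset.sum_range_succ, Finset.sum_range_zero, zero_add]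
  have h2 : gg 1 2 = -(qb 2 2 * X^(tri 1)) := by
    unfold gg
    rw [e_ge _ _ (by omega), show 2*1 = 2 from rfl, show (2:ℕ) - 1 = 1 from rfl]
    norm_num
  have q22 : qb 2 2 = 1 := by
    rw [show (2:ℕ) = 1+1 from rfl, qb_succ, qb11, qb_eq_zero (show 1 < 1+1 by omega)]
    ring
  have q21 : qb (2*0+2) 1 = 1 + X := by
    rw [show 2*0+2 = 1+1 by norm_num, qb1_step, qb11]
    ring
  rw [h, gg_n0 0, gg_n1 0, h2, q22, q21]
  simp [tri]

lemma Usum_zero : ∀ n, Usum (n+1) = 0 := by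
  intro n
  induction n with
  | zero => exact Usum_one
  | succ n ih =>
    rw [Usum_succ (n+1), ih, gg_n0 (n+1), gg_n1 (n+1), gg_n0 n, gg_n1 n]
    simp only [Nat.add_sub_cancel]
    have hq : qb (2*(n+1)+2) 1 = 1 + X^(2*(n+1)+1) + X * qb (2*n+2) 1 := by
      rw [show 2*(n+1)+2 = (2*(n+1)+1)+1 by ring, qb1_step,
        show 2*(n+1)+1 = 2*n+2+1 by ring, qb_one]
      ring
    have hx1 : (X:R5)^(tri (n+1)) = X^(n+1) * X^(tri n) := by
      rw [← pow_add]
      congr 1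
      rw [tri_succ]
      omega
    have hx2 : (X:R5)^(n+1) * X^(tri (n-1)) = X^(tri n) * X := by
      rw [← pow_add, ← pow_succ]
      congr 1
      have := tri_pred n
      omega
    linear_combination ((-1:R5)^(n+1) * X^(tri n)) * hq + ((-1:R5)^n) * hx1
      + ((-1:R5)^n * qb (2*n+2) 1) * hx2

lemma Ssum_one : Ssum 1 = 1 - X := by
  have h : Ssum 1 = ((0:ℕ):R5) * gg 1 0 + ((1:ℕ):R5) * gg 1 1 + ((2:ℕ):R5) * gg 1 2 := by
    rw [Ssum, show 2*1+1 = 3 by norm_num, Finset.sum_range_succ, Finset.sum_range_succ,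
      Finset.sum_range_succ, Finset.sum_range_zero, zero_add]
  have h2 : gg 1 2 = -(qb 2 2 * X^(tri 1)) := by
    unfold gg
    rw [e_ge _ _ (by omega), show 2*1 = 2 from rfl, show (2:ℕ) - 1 = 1 from rfl]
    norm_num
  have q22 : qb 2 2 = 1 := by
    rw [show (2:ℕ) = 1+1 from rfl, qb_succ, qb11, qb_eq_zero (show 1 < 1+1 by omega)]
    ring
  have q21 : qb (2*0+2) 1 = 1 + X := by
    rw [show 2*0+2 = 1+1 by norm_num, qb1_step, qb11]
    ring
  rw [h, gg_n1 0, h2, q22, q21]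
  push_cast
  simp [tri]
  ring

lemma Ssum_step (n : ℕ) : Ssum (n+2) = (1 - X^(n+1)) * (1 - X^(n+2)) * Ssum (n+1) := by
  rw [Ssum_succ (n+1), Usum_zero n, gg_n1 (n+1), gg_n0 n, gg_n1 n]
  simp only [Nat.add_sub_cancel]
  have hq : qb (2*(n+1)+2) 1 = 1 + X^(2*(n+1)+1) + X * qb (2*n+2) 1 := by
    rw [show 2*(n+1)+2 = (2*(n+1)+1)+1 by ring, qb1_step,
      show 2*(n+1)+1 = 2*n+2+1 by ring, qb_one]
    ring
  have hx2 : (X:R5)^(n+1) * X^(tri (n-1)) = X^(tri n) * X := by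
    rw [← pow_add, ← pow_succ]
    congr 1
    have := tri_pred n
    omega
  linear_combination ((-1:R5)^(n+1) * X^(tri n)) * hq + ((-1:R5)^n * qb (2*n+2) 1) * hx2

lemma Ssum_prod : ∀ n, Ssum (n+1) = Pf (n+1) * Pf n := by
  intro n
  induction n with
  | zero =>
    rw [Ssum_one]
    simp [Pf]
  | succ n ih =>
    rw [Ssum_step, ih, Pf_succ (n+1), Pf_succ n]
    ring

lemma dvd_mul_one_sub {L : ℕ} {a b : R5} (ha : X^L ∣ a - 1) (hb : X^L ∣ b - 1) :
    X^L ∣ a*b - 1 := by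
  have h : a*b - 1 = (a-1)*b + (b-1) := by ring
  rw [h]
  exact dvd_add (ha.mul_right b) hb

lemma prod_sub_one_dvd (L : ℕ) (f : ℕ → ℕ) :
    ∀ d, (∀ i, i < d → L ≤ f i) → X^L ∣ (∏ i ∈ Finset.range d, (1 - (X:R5)^(f i))) - 1 := by
  intro d
  induction d with
  | zero => simp
  | succ d ih =>
    intro hf
    rw [Finset.prod_range_succ]
    apply dvd_mul_one_sub (ih (fun i hi => hf i (by omega)))
    have h : (1 - (X:R5)^(f d)) - 1 = -(X^(f d)) := by ring
    rw [h]
    exact (pow_dvd_pow X (hf d (by omega))).neg_right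

lemma Df_sub_one (N m : ℕ) (h : m ≤ N) : X^(N-m+1) ∣ Df N m - 1 := by
  apply prod_sub_one_dvd
  intro i hi
  omega

lemma Pf_factor {a b : ℕ} (h : a ≤ b) :
    ∃ E : R5, Pf b = Pf a * E ∧ X^(a+1) ∣ E - 1 := by
  obtain ⟨d, rfl⟩ := Nat.exists_eq_add_of_le h
  refine ⟨∏ i ∈ Finset.range d, (1 - (X:R5)^(a+i+1)), ?_, ?_⟩
  · rw [Pf, Finset.prod_range_add]
    rfl
  · exact prod_sub_one_dvd _ _ d (fun i _ => by omega)

lemma isUnit_of_dvd_sub_one {L : ℕ} {E : R5} (hL : 0 < L) (h : X^L ∣ E - 1) : IsUnit E := by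
  rw [PowerSeries.isUnit_iff_constantCoeff]
  obtain ⟨g, hg⟩ := h
  have h0 : constantCoeff (R := ZMod 5) (E - 1) = 0 := by
    rw [hg, map_mul, map_pow, constantCoeff_X, zero_pow (by omega), zero_mul]
  rw [map_sub, map_one, sub_eq_zero] at h0
  rw [h0]
  exact isUnit_one

/-- the order to which `qb (2n+2) m * Pf (n+1)` agrees with `1`. -/
def Kf (n m : ℕ) : ℕ := if m ≤ n+1 then m+1 else 2*n+3-m

lemma qbPf_one (n m : ℕ) (hm : m ≤ 2*n+2) :
    X^(Kf n m) ∣ qb (2*n+2) m * Pf (n+1) - 1 := by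
  by_cases h : m ≤ n+1
  · rw [Kf, if_pos h]
    obtain ⟨E, hE, hE1⟩ := Pf_factor h
    rw [hE, ← mul_assoc, qb_mul_Pf]
    apply dvd_mul_one_sub _ hE1
    exact dvd_trans (pow_dvd_pow X (by omega)) (Df_sub_one (2*n+2) m hm)
  · rw [Kf, if_neg h]
    obtain ⟨E, hE, hE1⟩ := Pf_factor (show n+1 ≤ m by omega)
    have hU : IsUnit E := isUnit_of_dvd_sub_one (by omega) hE1
    rw [← (hU.dvd_mul_right)]
    have heq : (qb (2*n+2) m * Pf (n+1) - 1) * E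
        = (qb (2*n+2) m * Pf m - 1) - (E - 1) := by
      rw [hE]; ring
    rw [heq, qb_mul_Pf]
    apply dvd_sub
    · exact dvd_trans (pow_dvd_pow X (by omega)) (Df_sub_one (2*n+2) m hm)
    · exact dvd_trans (pow_dvd_pow X (by omega)) hE1

lemma coeff_X_pow_mul_near_one {t ex K : ℕ} {w : R5} (hw : X^K ∣ w - 1) (hb : t < ex + K) :
    coeff (R := ZMod 5) t (X^ex * w) = if ex = t then 1 else 0 := by
  have h : (X:R5)^ex * w = X^ex + X^ex * (w - 1) := by ring
  rw [h, map_add]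
  have h2 : coeff (R := ZMod 5) t (X^ex * (w-1)) = 0 := by
    have hd : (X:R5)^(ex+K) ∣ X^ex * (w-1) := by
      rw [pow_add]
      exact mul_dvd_mul_left _ hw
    exact PowerSeries.X_pow_dvd_iff.mp hd t hb
  rw [h2, PowerSeries.coeff_X_pow, add_zero]
  by_cases hh : ex = t
  · simp [hh]
  · simp [hh, Ne.symm hh]

lemma e_lo (n m : ℕ) (h : m ≤ n) : e (n+1) m = tri (n - m) := by
  rw [e_lt _ _ (by omega)]
  congr 1
  omega

lemma e_hi (n m : ℕ) (h : n+1 ≤ m) : e (n+1) m = tri (m - (n+1)) := e_ge _ _ h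

lemma ebound (n m t : ℕ) (hm : m ≤ 2*n+2) (ht : t ≤ n) : t < e (n+1) m + Kf n m := by
  unfold Kf
  by_cases h : m ≤ n+1
  · rw [if_pos h]
    rcases Nat.lt_or_ge m (n+1) with h1 | h1
    · rw [e_lo n m (by omega)]
      have := le_tri (n - m)
      omega
    · have hm1 : m = n+1 := by omega
      subst hm1
      omega
  · rw [if_neg h, e_hi n m (by omega)]
    have := le_tri (m - (n+1))
    omega

lemma coeff_term (n m t : ℕ) (hm : m ≤ 2*n+2) (ht : t ≤ n) :
    coeff (R := ZMod 5) t (gg (n+1) m * Pf (n+1)) =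
      if e (n+1) m = t then (-1:ZMod 5)^(n+1+m) else 0 := by
  have h1 : gg (n+1) m * Pf (n+1)
      = C (R := ZMod 5) ((-1)^(n+1+m)) * (X^(e (n+1) m) * (qb (2*n+2) m * Pf (n+1))) := by
    unfold gg
    rw [show 2*(n+1) = 2*n+2 by ring, map_pow, map_neg, map_one]
    ring
  rw [h1, PowerSeries.coeff_C_mul,
    coeff_X_pow_mul_near_one (qbPf_one n m hm) (ebound n m t hm ht),
    mul_ite, mul_one, mul_zero]

lemma coeff_SP (n t : ℕ) (ht : t ≤ n) :
    coeff (R := ZMod 5) t (Ssum (n+1) * Pf (n+1)) =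
      ∑ m ∈ Finset.range (2*n+3),
        (m : ZMod 5) * (if e (n+1) m = t then (-1:ZMod 5)^(n+1+m) else 0) := by
  rw [Ssum, show 2*(n+1)+1 = 2*n+3 by ring, Finset.sum_mul, map_sum]
  apply Finset.sum_congr rfl
  intro m hm
  have hm' : m ≤ 2*n+2 := by
    have := Finset.mem_range.mp hm
    omega
  have hc : ((m:ℕ) : R5) * gg (n+1) m * Pf (n+1)
      = C (R := ZMod 5) ((m:ℕ) : ZMod 5) * (gg (n+1) m * Pf (n+1)) := by
    rw [map_natCast]
    ring
  rw [hc, PowerSeries.coeff_C_mul, coeff_term n m t hm' ht]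

lemma coeff_cube (t n : ℕ) (ht : t ≤ n) :
    coeff (R := ZMod 5) t (Pf (n+1) ^ 3) =
      ∑ k ∈ Finset.range (t+1),
        (if tri k = t then (-1:ZMod 5)^k * ((2*k+1 : ℕ) : ZMod 5) else 0) := by
  have hcube : Pf (n+1)^3 = Ssum (n+1) * Pf (n+1) * (1 - X^(n+1)) := by
    rw [Ssum_prod n, Pf_succ n]
    ring
  rw [hcube, mul_sub, mul_one, map_sub, PowerSeries.coeff_mul_X_pow', if_neg (by omega),
    sub_zero, coeff_SP n t ht]
  by_cases hex : ∃ k, k ≤ t ∧ tri k = t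
  · obtain ⟨k₀, hk₀, htri⟩ := hex
    obtain ⟨j, rfl⟩ : ∃ j, n = k₀ + j := ⟨n - k₀, by omega⟩
    have he₁ : e (k₀+j+1) (2*k₀+j+1) = t := by
      rw [e_hi _ _ (by omega), show 2*k₀+j+1 - (k₀+j+1) = k₀ by omega, htri]
    have he₂ : e (k₀+j+1) j = t := by
      rw [e_lo _ _ (by omega), show k₀+j - j = k₀ by omega, htri]
    have hvanish : ∀ m ∈ Finset.range (2*(k₀+j)+3), m ∉ ({2*k₀+j+1, j} : Finset ℕ) →
        (m : ZMod 5) * (if e (k₀+j+1) m = t then (-1:ZMod 5)^(k₀+j+1+m) else 0) = 0 := by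
      intro m _ hm2
      simp only [Finset.mem_insert, Finset.mem_singleton] at hm2
      push_neg at hm2
      rw [if_neg, mul_zero]
      intro hcon
      rcases Nat.lt_or_ge m (k₀+j+1) with h1 | h1
      · rw [e_lo _ _ (by omega)] at hcon
        have := tri_injective (hcon.trans htri.symm)
        omega
      · rw [e_hi _ _ (by omega)] at hcon
        have := tri_injective (hcon.trans htri.symm)
        omega
    have hsub : ({2*k₀+j+1, j} : Finset ℕ) ⊆ Finset.range (2*(k₀+j)+3) := by
      intro x hx
      simp only [Finset.mem_insert, Finset.mem_singleton] at hx
      rcases hx with rfl | rfl <;> (rw [Finset.mem_range]; omega)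
    rw [← Finset.sum_subset hsub hvanish, Finset.sum_pair (show 2*k₀+j+1 ≠ j by omega)]
    have hrhs : ∑ k ∈ Finset.range (t+1),
        (if tri k = t then (-1:ZMod 5)^k * ((2*k+1 : ℕ) : ZMod 5) else 0)
        = (-1:ZMod 5)^k₀ * ((2*k₀+1 : ℕ) : ZMod 5) := by
      rw [Finset.sum_eq_single_of_mem k₀ (Finset.mem_range.mpr (by omega))]
      · rw [if_pos htri]
      · intro b _ hb
        rw [if_neg]
        intro hcon
        exact hb (tri_injective (hcon.trans htri.symm))
    rw [hrhs, if_pos he₁, if_pos he₂]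
    have hs₁ : (-1:ZMod 5)^(k₀+j+1+(2*k₀+j+1)) = (-1)^k₀ := by
      rw [show k₀+j+1+(2*k₀+j+1) = 2*(k₀+j+1)+k₀ by ring, pow_add, pow_mul]
      norm_num
    have hs₂ : (-1:ZMod 5)^(k₀+j+1+j) = -(-1)^k₀ := by
      rw [show k₀+j+1+j = 2*j+(k₀+1) by ring, pow_add, pow_mul]
      norm_num [pow_succ]
    rw [hs₁, hs₂]
    push_cast
    ring
  · push_neg at hex
    rw [Finset.sum_eq_zero, Finset.sum_eq_zero]
    · intro k hk
      rw [if_neg]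
      intro hcon
      exact absurd hcon (hex k (by have := Finset.mem_range.mp hk; omega))
    · intro m _
      rw [if_neg, mul_zero]
      intro hcon
      rcases Nat.lt_or_ge m (n+1) with h1 | h1
      · rw [e_lo _ _ (by omega)] at hcon
        have := le_tri (n - m)
        exact absurd hcon (hex (n-m) (by omega))
      · rw [e_hi _ _ (by omega)] at hcon
        have := le_tri (m - (n+1))
        exact absurd hcon (hex (m - (n+1)) (by omega))

lemma coeff_cube_eq_zero (t M : ℕ) (ht : t < M)
    (h5 : (t:ZMod 5) = 2 ∨ (t:ZMod 5) = 3 ∨ (t:ZMod 5) = 4) :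
    coeff (R := ZMod 5) t (Pf M ^ 3) = 0 := by
  obtain ⟨n, rfl⟩ : ∃ n, M = n+1 := ⟨M-1, by omega⟩
  rw [coeff_cube t n (by omega)]
  apply Finset.sum_eq_zero
  intro k _
  by_cases hk : tri k = t
  · rw [if_pos hk]
    have h8 : (2*(k:ZMod 5)+1)^2 = 8 * (t : ZMod 5) + 1 := by
      have := eight_tri k
      rw [hk] at this
      have hcast : (((2*k+1)^2 : ℕ) : ZMod 5) = ((8 * t + 1 : ℕ) : ZMod 5) := by rw [this]
      push_cast at hcast
      exact hcast
    rcases h5 with h | h | h <;> rw [h] at h8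
    · exfalso
      have : ∀ x : ZMod 5, x^2 ≠ 8 * 2 + 1 := by decide
      exact this _ h8
    · have hz : ∀ x : ZMod 5, x^2 = 8 * 3 + 1 → x = 0 := by decide
      have hz2 : ((2*k+1 : ℕ) : ZMod 5) = 0 := by
        push_cast
        exact hz _ h8
      rw [hz2, mul_zero]
    · exfalso
      have : ∀ x : ZMod 5, x^2 ≠ 8 * 4 + 1 := by decide
      exact this _ h8
  · rw [if_neg hk]

noncomputable def Fser (c : ℕ → ℤ) : R5 := PowerSeries.mk (fun m => ((c m : ℤ) : ZMod 5))

noncomputable def Theta : R5 := PowerSeries.mk (fun a => ((frobThetaCoeff 2 a : ℕ) : ZMod 5))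

instance R5char : CharP R5 5 := by
  apply charP_of_injective_ringHom (f := C (R := ZMod 5))
  intro a b h
  have := congrArg (constantCoeff (R := ZMod 5)) h
  simpa using this

lemma hc5 (c : ℕ → ℤ) (hc : IsCphi 2 c) (N : ℕ) :
    coeff (R := ZMod 5) N (Fser c * Pf (N+1)^2) = coeff (R := ZMod 5) N Theta := by
  have h := hc N
  have h2 := congrArg (Int.castRingHom (ZMod 5)) h
  rw [← PowerSeries.coeff_map] at h2
  have hmk : PowerSeries.map (Int.castRingHom (ZMod 5)) (PowerSeries.mk fun m => c m)
      = Fser c := by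
    ext j
    rw [PowerSeries.coeff_map, PowerSeries.coeff_mk, Fser, PowerSeries.coeff_mk]
    rfl
  have hprod : PowerSeries.map (Int.castRingHom (ZMod 5))
      (∏ i ∈ Finset.range (N + 1), (1 - (PowerSeries.X : PowerSeries ℤ) ^ (i + 1)) ^ 2)
      = Pf (N+1)^2 := by
    rw [map_prod, Pf, ← Finset.prod_pow]
    apply Finset.prod_congr rfl
    intro i _
    rw [map_pow, map_sub, map_one, map_pow, PowerSeries.map_X]
  rw [map_mul, hmk, hprod] at h2
  rw [h2, Theta, PowerSeries.coeff_mk]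
  rfl

lemma trunc_ext (c : ℕ → ℤ) (N M : ℕ) (h : N+1 ≤ M) :
    coeff (R := ZMod 5) N (Fser c * Pf M ^2) = coeff (R := ZMod 5) N (Fser c * Pf (N+1)^2) := by
  obtain ⟨E, hE, hd⟩ := Pf_factor h
  have h2 : (X:R5)^(N+2) ∣ E^2 - 1 := by
    rw [pow_two]
    exact dvd_mul_one_sub hd hd
  have h3 : Fser c * Pf M^2 - Fser c * Pf (N+1)^2 = (Fser c * Pf (N+1)^2) * (E^2 - 1) := by
    rw [hE]
    ring
  have h4 : coeff (R := ZMod 5) N (Fser c * Pf M^2 - Fser c * Pf (N+1)^2) = 0 := by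
    rw [h3]
    have h2' : (X:R5)^(N+1) ∣ E^2 - 1 := dvd_trans (pow_dvd_pow X (by omega : N+1 ≤ N+2)) h2
    exact PowerSeries.X_pow_dvd_iff.mp (h2'.mul_left _) N (by omega)
  rw [map_sub, sub_eq_zero] at h4
  exact h4

lemma coeff_mul_eq_of_agree {f g : R5} {D : ℕ}
    (h : ∀ j, j ≤ D → coeff (R := ZMod 5) j f = coeff (R := ZMod 5) j g) (hh : R5) {N : ℕ} (hN : N ≤ D) :
    coeff (R := ZMod 5) N (f * hh) = coeff (R := ZMod 5) N (g * hh) := by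
  rw [PowerSeries.coeff_mul, PowerSeries.coeff_mul]
  apply Finset.sum_congr rfl
  intro p hp
  have := Finset.HasAntidiagonal.mem_antidiagonal.mp hp
  rw [h p.1 (by omega)]

noncomputable def Rprod (M : ℕ) : R5 := ∏ i ∈ Finset.range M, (1 - X^(5*(i+1)))

lemma Pf_pow5 (M : ℕ) : Pf M ^ 5 = Rprod M := by
  rw [Pf, Rprod, ← Finset.prod_pow]
  apply Finset.prod_congr rfl
  intro i _
  rw [sub_pow_char, one_pow, ← pow_mul]
  congr 1
  ring

lemma Rprod_coeff_not5 (M : ℕ) : ∀ a : ℕ, ¬ (5 ∣ a) → coeff (R := ZMod 5) a (Rprod M) = 0 := by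
  induction M with
  | zero =>
    intro a ha
    rw [Rprod, Finset.prod_range_zero, PowerSeries.coeff_one, if_neg (by omega)]
  | succ M ih =>
    intro a ha
    rw [Rprod, Finset.prod_range_succ, ← Rprod, mul_sub, mul_one, map_sub,
      PowerSeries.coeff_mul_X_pow', ih a ha]
    by_cases hle : 5*(M+1) ≤ a
    · rw [if_pos hle, ih _ (by omega)]
      ring
    · rw [if_neg hle]
      ring

lemma Rprod_coeff_zero (M : ℕ) : coeff (R := ZMod 5) 0 (Rprod M) = 1 := by
  rw [PowerSeries.coeff_zero_eq_constantCoeff, Rprod, map_prod]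
  apply Finset.prod_eq_one
  intro i _
  rw [map_sub, map_one, map_pow, constantCoeff_X, zero_pow (by omega), sub_zero]

lemma sq_vals : ∀ x : ZMod 5, x^2 = 0 ∨ x^2 = 1 ∨ x^2 = 4 := by decide

lemma theta_sq (a : ℕ) (h : coeff (R := ZMod 5) a Theta ≠ 0) :
    ∃ x : ZMod 5, (a : ZMod 5) = x^2 := by
  rw [Theta, PowerSeries.coeff_mk] at h
  have hne : frobThetaCoeff 2 a ≠ 0 := by
    intro h0
    rw [h0] at h
    simp at h
  rw [frobThetaCoeff] at hne
  have hnonempty : Nonempty {v : Fin (2-1) → ℤ // frobQ v = (a:ℤ)} :=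
    (Nat.card_ne_zero.mp hne).1
  obtain ⟨⟨v, hv⟩⟩ := hnonempty
  have hQ : frobQ v = v 0 ^ 2 := by
    rw [frobQ]
    have h1 : ∑ i, ∑ j ∈ Finset.Ioi i, v i * v j = 0 := by
      apply Finset.sum_eq_zero
      intro i _
      apply Finset.sum_eq_zero
      intro j hj
      have hlt := Finset.mem_Ioi.mp hj
      have : i = j := Fin.ext (by have := i.isLt; have := j.isLt; omega)
      exact absurd hlt (by rw [this]; exact lt_irrefl j)
    rw [h1, add_zero]
    exact Fin.sum_univ_one _
  refine ⟨((v 0 : ℤ) : ZMod 5), ?_⟩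
  have h2 := congrArg (fun z : ℤ => (z : ZMod 5)) (hv.symm.trans hQ)
  push_cast at h2 ⊢
  exact h2

lemma theta_side (n M : ℕ) (hM : 5*n+4 ≤ M) :
    coeff (R := ZMod 5) (5*n+3) (Theta * Pf M ^ 3) = 0 := by
  rw [PowerSeries.coeff_mul]
  apply Finset.sum_eq_zero
  intro p hp
  have hsum := Finset.HasAntidiagonal.mem_antidiagonal.mp hp
  by_cases hθ : coeff (R := ZMod 5) p.1 Theta = 0
  · rw [hθ, zero_mul]
  · obtain ⟨x, hx⟩ := theta_sq p.1 hθ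
    have hcast : ((p.1 : ℕ) : ZMod 5) + ((p.2 : ℕ) : ZMod 5) = 3 := by
      have : ((5*n+3 : ℕ) : ZMod 5) = 3 := by
        push_cast
        rw [show ((5:ZMod 5)) = 0 by decide]
        ring
      rw [← this, ← Nat.cast_add, hsum]
    have hp2 : ((p.2 : ℕ) : ZMod 5) = 3 - x^2 := by
      rw [← hx]
      linear_combination hcast
    have h5 : ((p.2:ℕ) : ZMod 5) = 2 ∨ ((p.2:ℕ) : ZMod 5) = 3 ∨ ((p.2:ℕ) : ZMod 5) = 4 := by
      rcases sq_vals x with h | h | h <;> rw [h] at hp2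
      · right; left
        rw [hp2]; decide
      · left
        rw [hp2]; decide
      · right; right
        rw [hp2]; decide
    rw [coeff_cube_eq_zero p.2 M (by omega) h5, mul_zero]

end Dewar

/-- Dewar: `cφ₂(5n+3) ≡ 0 (mod 5)`. -/
theorem cphi_two_mod_five (c : ℕ → ℤ) (hc : IsCphi 2 c) (n : ℕ) :
    5 ∣ c (5 * n + 3) := by
  open Dewar in
  suffices key : ∀ n : ℕ, ((c (5*n+3) : ℤ) : ZMod 5) = 0 by
    have := (ZMod.intCast_zmod_eq_zero_iff_dvd (c (5*n+3)) 5).mp (key n)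
    exact_mod_cast this
  intro n
  induction n using Nat.strong_induction_on with
  | _ n ih =>
  set M := 5*n+4 with hM
  have h1 : ∀ j, j ≤ 5*n+3 → coeff (R := ZMod 5) j (Dewar.Fser c * Dewar.Pf M ^2)
      = coeff (R := ZMod 5) j Dewar.Theta := by
    intro j hj
    rw [Dewar.trunc_ext c j M (by omega), Dewar.hc5 c hc j]
  have h2 : coeff (R := ZMod 5) (5*n+3) ((Dewar.Fser c * Dewar.Pf M ^2) * Dewar.Pf M ^3)
      = coeff (R := ZMod 5) (5*n+3) (Dewar.Theta * Dewar.Pf M ^3) :=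
    Dewar.coeff_mul_eq_of_agree h1 _ (le_refl _)
  have h3 : (Dewar.Fser c * Dewar.Pf M ^2) * Dewar.Pf M ^3 = Dewar.Fser c * Dewar.Rprod M := by
    rw [mul_assoc, ← pow_add, show 2+3 = 5 from rfl, Dewar.Pf_pow5]
  have h4 : coeff (R := ZMod 5) (5*n+3) (Dewar.Theta * Dewar.Pf M ^3) = 0 :=
    Dewar.theta_side n M (le_refl _)
  have h5 : coeff (R := ZMod 5) (5*n+3) (Dewar.Fser c * Dewar.Rprod M)
      = ((c (5*n+3) : ℤ) : ZMod 5) := by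
    rw [PowerSeries.coeff_mul]
    rw [Finset.sum_eq_single ((5*n+3 : ℕ), (0:ℕ))]
    · rw [Dewar.Rprod_coeff_zero, Dewar.Fser, PowerSeries.coeff_mk, mul_one]
    · intro p hp hne
      have hsum := Finset.HasAntidiagonal.mem_antidiagonal.mp hp
      have hp2 : p.2 ≠ 0 := by
        intro h0
        apply hne
        have h1' : p.1 = 5*n+3 := by omega
        exact Prod.ext h1' h0
      by_cases h5d : 5 ∣ p.2
      · obtain ⟨j, hj⟩ := h5d
        have hj1 : 1 ≤ j := by omega
        have hjn : j ≤ n := by omega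
        have hm : p.1 = 5*(n-j)+3 := by omega
        rw [Dewar.Fser, PowerSeries.coeff_mk, hm, ih (n-j) (by omega), zero_mul]
      · rw [Dewar.Rprod_coeff_not5 M p.2 h5d, mul_zero]
    · intro habs
      exfalso
      apply habs
      simp
  rw [← h5, ← h3, h2, h4]
end

section
/- For every positive integer k, cφ_k(3) = 3k² + 2k²·(k choose 2) + (k choose 3)², which equals k²(k⁴-6k³+49k²-48k+112)/36. -/
open Finset PowerSeries

/-
Prepending `-∑ vᵢ` to `v` identifies `{Q = n}` with the integer vectors of length `k`, sum `0`
and squared norm `2n`, since `2 Q(v) = (∑ vᵢ)² + ∑ vᵢ²`. For `n ≤ 4` all entries of such vectors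
lie in `[-2, 2]`, so splitting off the first entry gives a recursion in `k` for the number of
vectors of length `k` with prescribed sum and squared norm, which yields polynomial formulas for
the theta coefficients `θ(0), …, θ(3)`. Comparing the coefficients of `q⁰, …, q³` in
`(∑ c(n) qⁿ) · ∏ (1 - qⁿ)^k = ∑ θ(n) qⁿ` gives a triangular linear system for `c(0), …, c(3)`.
-/

def vecCount (S : Finset ℤ) (r : ℕ) (a b : ℤ) : ℕ :=
  #{f ∈ Fintype.piFinset fun _ : Fin r => S | ∑ i, f i = a ∧ ∑ i, f i ^ 2 = b}

namespace vecCount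

variable (S : Finset ℤ)

lemma zero_eq (a b : ℤ) : vecCount S 0 a b = if a = 0 ∧ b = 0 then 1 else 0 := by
  unfold vecCount
  split_ifs with h <;> simp [h, eq_comm]

lemma succ_eq (r : ℕ) (a b : ℤ) :
    vecCount S (r + 1) a b = ∑ x ∈ S, vecCount S r (a - x) (b - x ^ 2) := by
  rw [vecCount, card_eq_sum_card_fiberwise (f := fun f => f 0) (t := S)
    fun f hf => Fintype.mem_piFinset.1 (mem_filter.1 hf).1 0]
  refine sum_congr rfl fun x hx => card_nbij' Fin.tail (fun g => Fin.cons x g) ?_ ?_ ?_ ?_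
  · intro f hf
    simp only [coe_filter, mem_filter, Fintype.mem_piFinset, Set.mem_ofPred_eq,
      Fin.sum_univ_succ] at hf ⊢
    obtain ⟨⟨hS, hsum, hsq⟩, rfl⟩ := hf
    exact ⟨fun i => hS _, by simp [Fin.tail]; linarith, by simp [Fin.tail]; linarith⟩
  · intro g hg
    simp only [coe_filter, mem_filter, Fintype.mem_piFinset, Set.mem_ofPred_eq,
      Fin.sum_univ_succ] at hg ⊢
    obtain ⟨hS, hsum, hsq⟩ := hg
    refine ⟨⟨Fin.cases hx hS, ?_, ?_⟩, rfl⟩ <;> simp <;> linarith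
  · intro f hf
    simp only [coe_filter, mem_filter, Set.mem_ofPred_eq] at hf
    rw [← hf.2]
    exact Fin.cons_self_tail f
  · intro g _
    exact Fin.tail_cons _ _

lemma eq_zero_of_lt {r : ℕ} {a b : ℤ} (h : b < |a|) : vecCount S r a b = 0 := by
  refine card_eq_zero.2 (filter_eq_empty_iff.2 fun f _ ⟨hsum, hsq⟩ => h.not_ge ?_)
  calc |a| ≤ ∑ i, |f i| := hsum ▸ abs_sum_le_sum_abs _ _
    _ ≤ b := hsq ▸ sum_le_sum fun i _ =>
      (Int.abs_eq_natAbs (f i)).trans_le (Int.natAbs_le_self_sq _)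

variable {S} in
lemma neg_left (hS : ∀ x ∈ S, -x ∈ S) (r : ℕ) (a b : ℤ) :
    vecCount S r (-a) b = vecCount S r a b := by
  refine card_nbij' (fun f => -f) (fun f => -f) ?_ ?_ (fun f _ => neg_neg f) (fun f _ => neg_neg f)
  all_goals
    intro f hf
    simp only [coe_filter, Fintype.mem_piFinset, Set.mem_ofPred_eq] at hf ⊢
    obtain ⟨hmem, hsum, hsq⟩ := hf
    refine ⟨fun i => hS _ (hmem i), ?_, ?_⟩ <;> simp [sum_neg_distrib, hsum, hsq]

end vecCount

lemma sum_Icc_neg_two_two {M : Type*} [AddCommMonoid M] (F : ℤ → M) :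
    ∑ x ∈ Icc (-2 : ℤ) 2, F x = F (-2) + F (-1) + F 0 + F 1 + F 2 := by
  rw [show Icc (-2 : ℤ) 2 = {-2, -1, 0, 1, 2} by decide]
  simp [add_assoc]

local notation "N" => vecCount (Icc (-2) 2)

lemma vecCount_Icc_succ (r : ℕ) (a b : ℤ) :
    N (r + 1) a b =
      N r (a + 2) (b - 4) + N r (a + 1) (b - 1) + N r a b + N r (a - 1) (b - 1) +
        N r (a - 2) (b - 4) := by
  rw [vecCount.succ_eq, sum_Icc_neg_two_two]
  norm_num [sub_neg_eq_add]

lemma vecCount_Icc_neg (r : ℕ) (a b : ℤ) : N r (-a) b = N r a b :=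
  vecCount.neg_left (fun x hx => by rw [mem_Icc] at hx ⊢; omega) r a b

-- The pairs `(a, b)` below are those that `vecCount_Icc_succ` reaches from `(0, 6)`, up to the
-- sign of `a` and omitting those with `b < |a|`.
lemma vecCount_zero_zero (r : ℕ) : N r 0 0 = 1 := by
  induction r with
  | zero => simp [vecCount.zero_eq]
  | succ r ih =>
    rw [vecCount_Icc_succ]
    norm_num [vecCount.eq_zero_of_lt, ih]

lemma vecCount_one_one (r : ℕ) : (N r 1 1 : ℤ) = r := by
  induction r with
  | zero => simp [vecCount.zero_eq]
  | succ r ih =>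
    rw [vecCount_Icc_succ]
    norm_num [vecCount.eq_zero_of_lt, vecCount_Icc_neg, vecCount_zero_zero]
    exact_mod_cast ih

lemma vecCount_zero_two (r : ℕ) : (N r 0 2 : ℤ) = r * (r - 1) := by
  induction r with
  | zero => simp [vecCount.zero_eq]
  | succ r ih =>
    rw [vecCount_Icc_succ]
    norm_num [vecCount.eq_zero_of_lt, vecCount_Icc_neg]
    linear_combination ih + 2 * vecCount_one_one r

lemma vecCount_two_two (r : ℕ) : 2 * (N r 2 2 : ℤ) = r * (r - 1) := by
  induction r with
  | zero => simp [vecCount.zero_eq]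
  | succ r ih =>
    rw [vecCount_Icc_succ]
    norm_num [vecCount.eq_zero_of_lt, vecCount_Icc_neg]
    linear_combination ih + 2 * vecCount_one_one r

lemma vecCount_one_three (r : ℕ) : 2 * (N r 1 3 : ℤ) = r * (r - 1) * (r - 2) := by
  induction r with
  | zero => simp [vecCount.zero_eq]
  | succ r ih =>
    rw [vecCount_Icc_succ]
    norm_num [vecCount.eq_zero_of_lt, vecCount_Icc_neg]
    linear_combination ih + vecCount_two_two r + 2 * vecCount_zero_two r

lemma vecCount_three_three (r : ℕ) : 6 * (N r 3 3 : ℤ) = r * (r - 1) * (r - 2) := by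
  induction r with
  | zero => simp [vecCount.zero_eq]
  | succ r ih =>
    rw [vecCount_Icc_succ]
    norm_num [vecCount.eq_zero_of_lt, vecCount_Icc_neg]
    linear_combination ih + 3 * vecCount_two_two r

lemma vecCount_zero_four (r : ℕ) : 4 * (N r 0 4 : ℤ) = r * (r - 1) * (r - 2) * (r - 3) := by
  induction r with
  | zero => simp [vecCount.zero_eq]
  | succ r ih =>
    rw [vecCount_Icc_succ]
    norm_num [vecCount.eq_zero_of_lt, vecCount_Icc_neg]
    linear_combination ih + 4 * vecCount_one_three r

lemma vecCount_two_four (r : ℕ) : 6 * (N r 2 4 : ℤ) = r * (r - 1) * (r - 2) * (r - 3) + 6 * r := by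
  induction r with
  | zero => simp [vecCount.zero_eq]
  | succ r ih =>
    rw [vecCount_Icc_succ]
    norm_num [vecCount.eq_zero_of_lt, vecCount_Icc_neg, vecCount_zero_zero]
    linear_combination ih + vecCount_three_three r + 3 * vecCount_one_three r

lemma vecCount_one_five (r : ℕ) :
    12 * (N r 1 5 : ℤ) = r * (r - 1) * (r - 2) * (r - 3) * (r - 4) + 12 * r * (r - 1) := by
  induction r with
  | zero => simp [vecCount.zero_eq]
  | succ r ih =>
    rw [vecCount_Icc_succ]
    norm_num [vecCount.eq_zero_of_lt, vecCount_Icc_neg]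
    linear_combination
      ih + 2 * vecCount_two_four r + 3 * vecCount_zero_four r + 12 * vecCount_one_one r

lemma vecCount_zero_six (r : ℕ) :
    36 * (N r 0 6 : ℤ) =
      r * (r - 1) * (r - 2) * (r - 3) * (r - 4) * (r - 5) + 36 * r * (r - 1) * (r - 2) := by
  induction r with
  | zero => simp [vecCount.zero_eq]
  | succ r ih =>
    rw [vecCount_Icc_succ]
    norm_num [vecCount.eq_zero_of_lt, vecCount_Icc_neg]
    linear_combination ih + 6 * vecCount_one_five r + 36 * vecCount_two_two r

lemma Fin.sq_sum_eq_sum_sq_add_two_mul {R : Type*} [CommRing R] :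
    ∀ {n : ℕ} (v : Fin n → R),
      (∑ i, v i) ^ 2 = ∑ i, v i ^ 2 + 2 * ∑ i, ∑ j ∈ Ioi i, v i * v j
  | 0, _ => by simp
  | n + 1, v => by
    rw [Fin.sum_univ_succ v, Fin.sum_univ_succ (v · ^ 2), Fin.sum_univ_succ, Fin.sum_Ioi_zero]
    simp_rw [Fin.sum_Ioi_succ]
    rw [← mul_sum]
    linear_combination Fin.sq_sum_eq_sum_sq_add_two_mul (fun i => v i.succ)

lemma two_mul_frobQ {r : ℕ} (v : Fin r → ℤ) : 2 * frobQ v = (∑ i, v i) ^ 2 + ∑ i, v i ^ 2 := by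
  rw [frobQ, Fin.sq_sum_eq_sum_sq_add_two_mul]
  ring

def frobQLevelEquiv (r : ℕ) (m : ℤ) :
    {v : Fin r → ℤ // frobQ v = m} ≃
      {w : Fin (r + 1) → ℤ // ∑ i, w i = 0 ∧ ∑ i, w i ^ 2 = 2 * m} where
  toFun v := ⟨Fin.cons (-∑ i, v.1 i) v.1, by
    have := two_mul_frobQ v.1
    simp only [Fin.sum_univ_succ, Fin.cons_zero, Fin.cons_succ, neg_add_cancel, neg_sq,
      true_and]
    linear_combination -this + 2 * v.2⟩
  invFun w := ⟨Fin.tail w.1, by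
    obtain ⟨w, hsum, hsq⟩ := w
    rw [Fin.sum_univ_succ] at hsum hsq
    have := two_mul_frobQ (Fin.tail w)
    rw [show w 0 = -∑ i : Fin r, w i.succ by linarith, neg_sq] at hsq
    simp only [Fin.tail] at this ⊢
    linarith⟩
  left_inv v := by ext; simp
  right_inv w := by
    obtain ⟨w, hsum, -⟩ := w
    rw [Fin.sum_univ_succ] at hsum
    ext i
    refine Fin.cases ?_ (fun i => rfl) i
    simp [Fin.tail]; linarith

lemma vecCount_Icc_eq_natCard (m r : ℕ) (a b : ℤ) (hb : b < (m + 1) ^ 2) :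
    vecCount (Icc (-m) m) r a b =
      Nat.card {f : Fin r → ℤ // ∑ i, f i = a ∧ ∑ i, f i ^ 2 = b} := by
  refine (Nat.subtype_card _ fun f => ?_).symm
  simp only [mem_filter, Fintype.mem_piFinset, mem_Icc, and_iff_right_iff_imp]
  rintro ⟨-, hsq⟩ i
  have hi : f i ^ 2 < (m + 1) ^ 2 :=
    (single_le_sum (fun j _ => sq_nonneg (f j)) (mem_univ i)).trans_lt (hsq ▸ hb)
  have := abs_lt.1 (abs_lt_of_sq_lt_sq hi (by positivity))
  omega

lemma frobThetaCoeff_eq_vecCount {k n : ℕ} (hk : 0 < k) (hn : n ≤ 4) :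
    frobThetaCoeff k n = N k 0 (2 * n) := by
  obtain ⟨r, rfl⟩ : ∃ r, k = r + 1 := ⟨k - 1, by omega⟩
  exact (Nat.card_congr (frobQLevelEquiv r n)).trans
    (vecCount_Icc_eq_natCard 2 (r + 1) 0 (2 * n) (by omega)).symm

lemma frobThetaCoeff_zero {k : ℕ} (hk : 0 < k) : frobThetaCoeff k 0 = 1 := by
  simpa [frobThetaCoeff_eq_vecCount hk] using vecCount_zero_zero k

lemma frobThetaCoeff_one {k : ℕ} (hk : 0 < k) : (frobThetaCoeff k 1 : ℤ) = k * (k - 1) := by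
  simpa [frobThetaCoeff_eq_vecCount hk] using vecCount_zero_two k

lemma four_mul_frobThetaCoeff_two {k : ℕ} (hk : 0 < k) :
    4 * (frobThetaCoeff k 2 : ℤ) = k * (k - 1) * (k - 2) * (k - 3) := by
  simpa [frobThetaCoeff_eq_vecCount hk] using vecCount_zero_four k

lemma thirtySix_mul_frobThetaCoeff_three {k : ℕ} (hk : 0 < k) :
    36 * (frobThetaCoeff k 3 : ℤ) =
      k * (k - 1) * (k - 2) * (k - 3) * (k - 4) * (k - 5) + 36 * k * (k - 1) * (k - 2) := by
  simpa [frobThetaCoeff_eq_vecCount hk] using vecCount_zero_six k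

lemma coeff_one_sub_X_pow_pow {R : Type*} [CommRing R] {t : ℕ} (ht : 0 < t) (k j : ℕ) :
    coeff j ((1 - X ^ t : R⟦X⟧) ^ k) =
      if t ∣ j then (-1) ^ (j / t) * (k.choose (j / t) : R) else 0 := by
  have expand : (1 - X ^ t : R⟦X⟧) ^ k =
      ∑ i ∈ range (k + 1), C ((-1) ^ i * (k.choose i : R)) * X ^ (t * i) := by
    rw [sub_eq_neg_add, add_pow]
    refine sum_congr rfl fun i _ => ?_
    rw [neg_pow, one_pow, mul_one, ← pow_mul, map_mul, map_pow, map_neg, map_one, map_natCast]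
    ring
  rw [expand, map_sum]
  simp only [coeff_C_mul_X_pow]
  rw [sum_eq_single (j / t)]
  · simp_rw [eq_comm (a := j), Nat.mul_div_eq_iff_dvd]
  · intro i _ hi
    rw [if_neg]
    rintro rfl
    exact hi (Nat.mul_div_cancel_left i ht).symm
  · intro h
    rw [Nat.choose_eq_zero_of_lt (by simpa using h)]
    simp

lemma coeff_one_sub_X_pow {R : Type*} [CommRing R] (k j : ℕ) :
    coeff j ((1 - X : R⟦X⟧) ^ k) = (-1) ^ j * (k.choose j : R) := by
  simpa using coeff_one_sub_X_pow_pow (R := R) one_pos k j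

lemma IsCphi.coeff_relations {k : ℕ} {c : ℕ → ℤ} (hc : IsCphi k c) :
    c 0 = frobThetaCoeff k 0 ∧
    c 1 - k * c 0 = frobThetaCoeff k 1 ∧
    c 2 - k * c 1 + (k.choose 2 - k) * c 0 = frobThetaCoeff k 2 ∧
    c 3 - k * c 2 + (k.choose 2 - k) * c 1 + (k ^ 2 - k - k.choose 3) * c 0 =
      frobThetaCoeff k 3 := by
  have h0 := hc 0
  have h1 := hc 1
  have h2 := hc 2
  have h3 := hc 3
  simp [prod_range_succ, coeff_mul, Nat.antidiagonal_succ, coeff_one_sub_X_pow_pow,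
    coeff_one_sub_X_pow] at h0 h1 h2 h3
  exact ⟨h0, by linear_combination h1, by linear_combination h2, by linear_combination h3⟩

lemma two_mul_choose_two (k : ℕ) : 2 * (k.choose 2 : ℤ) = k * (k - 1) := by
  rw [← Nat.cast_descFactorial_two, Nat.descFactorial_eq_factorial_mul_choose]
  push_cast
  rfl

lemma six_mul_choose_three (k : ℕ) : 6 * (k.choose 3 : ℤ) = k * (k - 1) * (k - 2) := by
  induction k with
  | zero => simp
  | succ k ih =>
    rw [Nat.choose_succ_succ']
    push_cast
    linear_combination ih + 3 * two_mul_choose_two k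

/-- For every positive integer `k`,
`cφ_k(3) = 3k² + 2k²·(k choose 2) + (k choose 3)² = k²(k⁴-6k³+49k²-48k+112)/36`. -/
theorem cphi_value_at_three (k : ℕ) (hk : 0 < k) (c : ℕ → ℤ) (hc : IsCphi k c) :
    c 3 = 3 * (k : ℤ) ^ 2 + 2 * (k : ℤ) ^ 2 * (k.choose 2 : ℤ) + ((k.choose 3 : ℤ)) ^ 2 ∧
      36 * c 3 =
        (k : ℤ) ^ 2 * ((k : ℤ) ^ 4 - 6 * (k : ℤ) ^ 3 + 49 * (k : ℤ) ^ 2 - 48 * k + 112) := by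
  obtain ⟨h0, h1, h2, h3⟩ := hc.coeff_relations
  have c0 : c 0 = 1 := by rw [h0, frobThetaCoeff_zero hk, Nat.cast_one]
  rw [c0, mul_one] at h1 h2 h3
  have c1 : c 1 = k ^ 2 := by linear_combination h1 + frobThetaCoeff_one hk
  have c2 : 4 * c 2 = k * (k - 1) * (k - 2) * (k - 3) + 4 * k ^ 3 - 2 * k * (k - 1) + 4 * k := by
    linear_combination 4 * h2 + four_mul_frobThetaCoeff_two hk + 4 * k * c1 -
      2 * two_mul_choose_two k
  have c3 : 36 * c 3 =
      (k : ℤ) ^ 2 * ((k : ℤ) ^ 4 - 6 * (k : ℤ) ^ 3 + 49 * (k : ℤ) ^ 2 - 48 * k + 112) := by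
    linear_combination 36 * h3 + thirtySix_mul_frobThetaCoeff_three hk + 9 * k * c2 -
      18 * c 1 * two_mul_choose_two k + (36 * k - 18 * k * (k - 1)) * c1 +
      6 * six_mul_choose_three k
  refine ⟨mul_left_cancel₀ (by norm_num : (36 : ℤ) ≠ 0) ?_, c3⟩
  linear_combination c3 - 36 * k ^ 2 * two_mul_choose_two k -
    (6 * k.choose 3 + k * (k - 1) * (k - 2)) * six_mul_choose_three k
end
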